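/- arXiv:1902.08272 — 3 statements merged into one kernel-verified Lean document; each statement's English description precedes it below -/
import Mathlib

section
/- For every scaffolding automaton A with input alphabet Σ there exists a total parsing expression grammar G over Σ recognising exactly the reversal of the language decided by A, i.e. L(G) = { xʳ : x ∈ L(A) }. -/
/-! ## Parsing expression grammars -/

/-- Parsing expressions over terminal alphabet `α` and non-terminal alphabet `ν`. -/
inductive PExp (α : Type) (ν : Type) : Type where
  | eps : PExp α ν
  | fail : PExp α ν
  | term (a : α) : PExp α ν
  | nt (A : ν) : PExp α ν
  | notP (e : PExp α ν) : PExp α ν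
  | andP (e : PExp α ν) : PExp α ν
  | seq (e₁ e₂ : PExp α ν) : PExp α ν
  | choice (e₁ e₂ : PExp α ν) : PExp α ν

/-- Big-step semantics of the recognition map `Rec` of a PEG with rules `R`:
`PegRec R e x r` holds iff `Rec(e,x)` is defined and equals `r`, where
`r = none` codes `FAIL` and `r = some y` codes the consumed prefix `y` of `x`. -/
inductive PegRec {α ν : Type} (R : ν → PExp α ν) :
    PExp α ν → List α → Option (List α) → Prop where
  | eps (x : List α) : PegRec R .eps x (some [])
  | fail (x : List α) : PegRec R .fail x none
  | termOk (a : α) (z : List α) : PegRec R (.term a) (a :: z) (some [a])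
  | termMismatch (a b : α) (z : List α) (h : a ≠ b) : PegRec R (.term a) (b :: z) none
  | termNil (a : α) : PegRec R (.term a) [] none
  | notFail (e : PExp α ν) (x : List α) :
      PegRec R e x none → PegRec R (.notP e) x (some [])
  | notSucc (e : PExp α ν) (x y : List α) :
      PegRec R e x (some y) → PegRec R (.notP e) x none
  | andSucc (e : PExp α ν) (x y : List α) :
      PegRec R e x (some y) → PegRec R (.andP e) x (some [])
  | andFail (e : PExp α ν) (x : List α) :
      PegRec R e x none → PegRec R (.andP e) x none
  | seqOk (e₁ e₂ : PExp α ν) (y₁ z y₂ : List α) :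
      PegRec R e₁ (y₁ ++ z) (some y₁) → PegRec R e₂ z (some y₂) →
      PegRec R (.seq e₁ e₂) (y₁ ++ z) (some (y₁ ++ y₂))
  | seqFail₁ (e₁ e₂ : PExp α ν) (x : List α) :
      PegRec R e₁ x none → PegRec R (.seq e₁ e₂) x none
  | seqFail₂ (e₁ e₂ : PExp α ν) (y₁ z : List α) :
      PegRec R e₁ (y₁ ++ z) (some y₁) → PegRec R e₂ z none →
      PegRec R (.seq e₁ e₂) (y₁ ++ z) none
  | choice₁ (e₁ e₂ : PExp α ν) (x y : List α) :
      PegRec R e₁ x (some y) → PegRec R (.choice e₁ e₂) x (some y)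
  | choice₂ (e₁ e₂ : PExp α ν) (x : List α) (r : Option (List α)) :
      PegRec R e₁ x none → PegRec R e₂ x r → PegRec R (.choice e₁ e₂) x r
  | ntRule (A : ν) (x : List α) (r : Option (List α)) :
      PegRec R (R A) x r → PegRec R (.nt A) x r

/-- A parsing expression grammar over the (finite) terminal alphabet `α`:
a finite alphabet `ν` of non-terminals, a rule for each non-terminal,
and a starting non-terminal. -/
structure PEG (α : Type) : Type 1 where
  ν : Type
  finNT : Finite ν
  R : ν → PExp α ν
  S : ν

/-- A PEG is total if its recognition map is total (defined on every expression and input). -/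
def PEG.Total {α : Type} (G : PEG α) : Prop :=
  ∀ (e : PExp α G.ν) (x : List α), ∃ r, PegRec G.R e x r

/-- The language recognised by a PEG: strings on which the starting
non-terminal succeeds and consumes the whole input. -/
def PEG.Lang {α : Type} (G : PEG α) : Set (List α) :=
  { x | PegRec G.R (.nt G.S) x (some x) }

/-- A language is in the class `PEG` iff some total parsing expression grammar recognises it. -/
def IsPEGLang {α : Type} (L : Set (List α)) : Prop :=
  ∃ G : PEG α, G.Total ∧ G.Lang = L

/-! ## Scaffolding automata -/

/-- A `(d,Γ)`-scaffold: nodes `0, …, top`, each node `v` carrying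
`d` (possibly missing) edges pointing backwards (to nodes `≤ v`)
and an optional label from `Γ`.  (The data of the functions at indices
beyond `top` is irrelevant.) -/
structure Scaffold (d : ℕ) (Γ : Type) : Type where
  top : ℕ
  edge : ℕ → Fin d → Option ℕ
  label : ℕ → Option Γ
  back : ∀ v i w, edge v i = some w → w ≤ v

/-- The type of `k`-neighbourhoods for `(d,Γ)`-scaffolds:
`N₀ = Γ ∪ {∅}` and `N_{k+1} = (Γ ∪ {∅}) × (N_k ∪ {∅})^d`. -/
def Nbhd (d : ℕ) (Γ : Type) : ℕ → Type
  | 0 => Option Γ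
  | k + 1 => Option Γ × (Fin d → Option (Nbhd d Γ k))

/-- The `k`-neighbourhood of node `v` in a scaffold. -/
def Scaffold.nbhd {d : ℕ} {Γ : Type} (S : Scaffold d Γ) : (k : ℕ) → ℕ → Nbhd d Γ k
  | 0, v => S.label v
  | k + 1, v => (S.label v, fun i => (S.edge v i).map (S.nbhd k))

/-- The specification of an edge of a newly created node: either a path
(a sequence of at most `k` edge indices, to be followed from the old top node),
or `SELF` (the new node itself), or `missing` (no edge, `∅`). -/
inductive PathSpec (d k : ℕ) : Type where
  | path (l : List (Fin d)) (h : l.length ≤ k) : PathSpec d k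
  | self : PathSpec d k
  | missing : PathSpec d k

/-- Following a path (sequence of edge indices) from node `v` in a scaffold;
returns `none` if the path is invalid. -/
def Scaffold.follow {d : ℕ} {Γ : Type} (S : Scaffold d Γ) :
    List (Fin d) → ℕ → Option ℕ
  | [], v => some v
  | i :: l, v => (S.edge v i).bind (S.follow l)

theorem Scaffold.follow_le {d : ℕ} {Γ : Type} (S : Scaffold d Γ) :
    ∀ (l : List (Fin d)) (v w : ℕ), S.follow l v = some w → w ≤ v := by
  intro l
  induction l with
  | nil =>
    intro v w h
    simp only [Scaffold.follow, Option.some_inj] at h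
    omega
  | cons i l ih =>
    intro v w h
    simp only [Scaffold.follow, Option.bind_eq_some_iff] at h
    obtain ⟨u, hu, hw⟩ := h
    exact le_trans (ih u w hw) (S.back v i u hu)

/-- The initial scaffold: a single unlabelled node with all edges missing. -/
def Scaffold.init (d : ℕ) (Γ : Type) : Scaffold d Γ where
  top := 0
  edge := fun _ _ => none
  label := fun _ => none
  back := by intro v i w h; exact absurd h (by simp)

/-- Appending a new top node with label `γ`, whose edges are determined by the
path specifications `ps` (followed from the old top node). -/
def Scaffold.extend {d k : ℕ} {Γ : Type} (S : Scaffold d Γ) (γ : Γ)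
    (ps : Fin d → PathSpec d k) : Scaffold d Γ where
  top := S.top + 1
  edge := fun v j =>
    if v = S.top + 1 then
      match ps j with
      | .missing => none
      | .self => some (S.top + 1)
      | .path l _ => S.follow l S.top
    else if v ≤ S.top then S.edge v j else none
  label := fun v =>
    if v = S.top + 1 then some γ else if v ≤ S.top then S.label v else none
  back := by
    intro v j w h
    try dsimp only at h
    split_ifs at h with h1 h2
    · subst h1
      rcases hps : ps j with ⟨l, hl⟩ | _ | _
      · rw [hps] at h
        have := S.follow_le l S.top w h
        omega
      · rw [hps] at h
        simp only [Option.some_inj] at h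
        omega
      · rw [hps] at h
        exact absurd h (by simp)
    · exact S.back v j w h

/-- A scaffolding automaton with input alphabet `σ`. -/
structure SAutomaton (σ : Type) : Type 1 where
  /-- degree -/
  d : ℕ
  dpos : 1 ≤ d
  /-- working alphabet -/
  Γ : Type
  finΓ : Finite Γ
  /-- distance -/
  k : ℕ
  /-- states -/
  Q : Type
  finQ : Finite Q
  /-- initial state -/
  q0 : Q
  /-- accepting states -/
  F : Set Q
  /-- transition function -/
  δ : Q → σ → Nbhd d Γ k → Q × Γ × (Fin d → PathSpec d k)

/-- A single step of computation of a scaffolding automaton on input symbol `a`. -/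
def SAutomaton.step {σ : Type} (A : SAutomaton σ) (a : σ) :
    A.Q × Scaffold A.d A.Γ → A.Q × Scaffold A.d A.Γ :=
  fun c =>
    let out := A.δ c.1 a (c.2.nbhd A.k c.2.top)
    (out.1, c.2.extend out.2.1 out.2.2)

/-- The state and scaffold reached by a scaffolding automaton after reading `x`. -/
def SAutomaton.run {σ : Type} (A : SAutomaton σ) (x : List σ) :
    A.Q × Scaffold A.d A.Γ :=
  x.foldl (fun c a => A.step a c) (A.q0, Scaffold.init A.d A.Γ)

/-- The language decided by a scaffolding automaton. -/
def SAutomaton.Lang {σ : Type} (A : SAutomaton σ) : Set (List σ) :=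
  { x | (A.run x).1 ∈ A.F }

/-!
The grammar reads `z = xʳ` from left to right, so it meets the run of `A` on `x` backwards: the
configuration reached on `(a :: t).reverse` is one transition away from the one reached on
`t.reverse`. For each property of the configuration there is a non-terminal that succeeds
without consuming input exactly when the property holds: `state q` for the state and `nbhd m M`
for the `m`-neighbourhood of the top node. Both are decided by guessing the last transition:
for every triple `(q', a', N')` the grammar reads `a'` and checks `state q'` and `nbhd k N'` on
the tail, and only the true triple survives. Scaffold nodes correspond to suffixes of `z`, so
following an edge or a path from the top node means consuming input (`edge i`, `path l`), and
the neighbourhood of a new node is verified edge by edge by following the prescribed path and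
testing `nbhd` at its end. Every rule either reads a symbol before recursing or only calls
non-terminals of smaller rank, which makes the grammar total.
-/

namespace PExp

variable {α ν : Type}

/-- A syntactic criterion ensuring that `e` never succeeds without consuming input. -/
def NonNullable : PExp α ν → Prop
  | .fail | .term _ => True
  | .seq e₁ e₂ => e₁.NonNullable ∨ e₂.NonNullable
  | .choice e₁ e₂ => e₁.NonNullable ∧ e₂.NonNullable
  | _ => False

/-- Every non-terminal that `e` may call before consuming any input satisfies `P`. -/
def Grounded (P : ν → Prop) : PExp α ν → Prop
  | .nt B => P B
  | .notP e | .andP e => e.Grounded P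
  | .seq e₁ e₂ => e₁.Grounded P ∧ (e₁.NonNullable ∨ e₂.Grounded P)
  | .choice e₁ e₂ => e₁.Grounded P ∧ e₂.Grounded P
  | _ => True

theorem grounded_true : ∀ e : PExp α ν, e.Grounded fun _ => True
  | .nt _ | .eps | .fail | .term _ => trivial
  | .notP e | .andP e => grounded_true e
  | .seq e₁ e₂ => ⟨grounded_true e₁, .inr (grounded_true e₂)⟩
  | .choice e₁ e₂ => ⟨grounded_true e₁, grounded_true e₂⟩

open Classical in
noncomputable def guard (c : Prop) (e : PExp α ν) : PExp α ν := if c then e else .fail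

def firstOf : List (PExp α ν) → PExp α ν
  | [] => .fail
  | e :: es => .choice e (firstOf es)

def seqOf : List (PExp α ν) → PExp α ν
  | [] => .eps
  | e :: es => .seq e (seqOf es)

theorem grounded_guard {P : ν → Prop} {c : Prop} {e : PExp α ν} (h : e.Grounded P) :
    (e.guard c).Grounded P := by
  unfold guard; split_ifs <;> trivial

theorem grounded_firstOf {P : ν → Prop} {es : List (PExp α ν)}
    (h : ∀ e ∈ es, e.Grounded P) : (firstOf es).Grounded P := by
  induction es with
  | nil => trivial
  | cons e es ih => exact ⟨h e (by simp), ih fun e' he' => h e' (by simp [he'])⟩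

theorem nonNullable_firstOf {es : List (PExp α ν)}
    (h : ∀ e ∈ es, e.NonNullable) : (firstOf es).NonNullable := by
  induction es with
  | nil => trivial
  | cons e es ih => exact ⟨h e (by simp), ih fun e' he' => h e' (by simp [he'])⟩

end PExp

open Classical in
noncomputable def testResult {α : Type} (p : Prop) : Option (List α) :=
  if p then some [] else none

namespace PegRec

variable {α ν : Type} {R : ν → PExp α ν} {e e₁ e₂ : PExp α ν} {x y z : List α}
  {r r₁ r₂ : Option (List α)}

theorem isPrefix (h : PegRec R e x (some y)) : y <+: x := by
  generalize hr : some y = r at h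
  induction h generalizing y with
  | seqOk _ _ y₁ z y₂ _ _ _ ih₂ =>
    cases hr
    exact (List.prefix_append_right_inj y₁).mpr (ih₂ rfl)
  | termOk a z => cases hr; exact List.prefix_append [a] z
  | choice₁ _ _ _ _ _ ih | choice₂ _ _ _ _ _ _ _ ih | ntRule _ _ _ _ ih => exact ih hr
  | _ => cases hr <;> exact List.nil_prefix

theorem unique (h₁ : PegRec R e x r₁) (h₂ : PegRec R e x r₂) : r₁ = r₂ := by
  induction h₁ generalizing r₂ with
  | seqOk _ _ y₁ z y₂ _ _ ih₁ ih₂ =>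
    generalize hx : y₁ ++ z = x at h₂
    cases h₂ with
    | seqOk _ _ y₁' z' _ h₁' h₂' =>
      obtain rfl : y₁ = y₁' := Option.some_injective _ (ih₁ (hx ▸ h₁'))
      obtain rfl := List.append_cancel_left hx
      cases ih₂ h₂'; rfl
    | seqFail₁ _ _ _ h => cases ih₁ (hx ▸ h)
    | seqFail₂ _ _ y₁' z' h₁' h₂' =>
      obtain rfl : y₁ = y₁' := Option.some_injective _ (ih₁ (hx ▸ h₁'))
      obtain rfl := List.append_cancel_left hx
      cases ih₂ h₂'
  | seqFail₂ _ _ y₁ z _ _ ih₁ ih₂ =>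
    generalize hx : y₁ ++ z = x at h₂
    cases h₂ with
    | seqOk _ _ y₁' z' _ h₁' h₂' =>
      obtain rfl : y₁ = y₁' := Option.some_injective _ (ih₁ (hx ▸ h₁'))
      obtain rfl := List.append_cancel_left hx
      cases ih₂ h₂'
    | seqFail₁ _ _ _ h => cases ih₁ (hx ▸ h)
    | seqFail₂ => rfl
  | _ => cases h₂ <;> first | rfl | grind

theorem ne_nil_of_nonNullable (h : PegRec R e x (some y)) (he : e.NonNullable) : y ≠ [] := by
  generalize hr : some y = r at h
  induction h generalizing y with
  | seqOk _ _ y₁ z y₂ _ _ ih₁ ih₂ =>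
    cases hr
    rcases he with he | he
    · simp [ih₁ he rfl]
    · simp [ih₂ he rfl]
  | termOk => cases hr; simp
  | choice₁ _ _ _ _ _ ih => exact ih he.1 hr
  | choice₂ _ _ _ _ _ _ _ ih => exact ih he.2 hr
  | _ => first | exact he.elim | cases hr

theorem andP_map (h : PegRec R e x r) : PegRec R (.andP e) x (r.map fun _ => []) := by
  cases r
  · exact .andFail _ _ h
  · exact .andSucc _ _ _ h

theorem andP_testResult {p : Prop} (h : PegRec R e x (testResult p)) :
    PegRec R (.andP e) x (testResult p) := by
  by_cases hp : p <;> simpa [testResult, hp] using h.andP_map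

theorem notP_testResult (h : PegRec R e x r) : PegRec R (.notP e) x (testResult (r = none)) := by
  cases r
  · simpa [testResult] using .notFail _ _ h
  · simpa [testResult] using .notSucc _ _ _ h

theorem choice (h₁ : PegRec R e₁ x r₁) (h₂ : PegRec R e₂ x r₂) :
    PegRec R (.choice e₁ e₂) x (r₁.or r₂) := by
  cases r₁
  · exact .choice₂ _ _ _ _ h₁ h₂
  · exact .choice₁ _ _ _ _ h₁

theorem seq_append (h₁ : PegRec R e₁ (y ++ z) (some y)) (h₂ : PegRec R e₂ z r₂) :
    PegRec R (.seq e₁ e₂) (y ++ z) (r₂.map (y ++ ·)) := by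
  cases r₂
  · exact .seqFail₂ _ _ _ _ h₁ h₂
  · exact .seqOk _ _ _ _ _ h₁ h₂

theorem seq_take {n : ℕ} (h₁ : PegRec R e₁ x (some (x.take n)))
    (h₂ : PegRec R e₂ (x.drop n) r₂) :
    PegRec R (.seq e₁ e₂) x (r₂.map (x.take n ++ ·)) := by
  have h := seq_append (e₂ := e₂) (z := x.drop n) (by rwa [List.take_append_drop]) h₂
  rwa [List.take_append_drop] at h

theorem seq_of_testResult {p : Prop} [Decidable p] (h₁ : PegRec R e₁ x (testResult p))
    (h₂ : p → PegRec R e₂ x r₂) :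
    PegRec R (.seq e₁ e₂) x (if p then r₂ else none) := by
  by_cases hp : p
  · simp only [testResult, hp, if_true] at h₁ ⊢
    simpa using seq_append (y := []) h₁ (h₂ hp)
  · simp only [testResult, hp, if_false] at h₁ ⊢
    exact .seqFail₁ _ _ _ h₁

theorem term_cons [DecidableEq α] {a b : α} {t : List α} :
    PegRec R (.term b) (a :: t) (if b = a then some [a] else none) := by
  split_ifs with h
  · exact h ▸ .termOk b t
  · exact .termMismatch b a t h

theorem guard {c : Prop} [Decidable c] (h : c → PegRec R e x r) :
    PegRec R (e.guard c) x (if c then r else none) := by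
  by_cases hc : c
  · simpa [PExp.guard, hc] using h hc
  · simpa [PExp.guard, hc] using .fail x

theorem guard_eps {c : Prop} : PegRec R (PExp.eps.guard c) x (testResult c) := by
  by_cases hc : c
  · simpa [PExp.guard, testResult, hc] using .eps x
  · simpa [PExp.guard, testResult, hc] using .fail x

theorem firstOf_of_forall_none {es : List (PExp α ν)} (h : ∀ e ∈ es, PegRec R e x none) :
    PegRec R (PExp.firstOf es) x none := by
  induction es with
  | nil => exact .fail x
  | cons e es ih => exact .choice₂ _ _ _ _ (h e (by simp)) (ih fun e' he' => h e' (by simp [he']))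

theorem firstOf_map_of_unique {β : Type} [DecidableEq β] {f : β → PExp α ν} {L : List β}
    {b₀ : β} {r : β → Option (List α)} (hb₀ : b₀ ∈ L)
    (h : ∀ b ∈ L, PegRec R (f b) x (if b = b₀ then r b else none)) :
    PegRec R (PExp.firstOf (L.map f)) x (r b₀) := by
  induction L with
  | nil => cases hb₀
  | cons b L ih =>
    have hb := h b (by simp)
    by_cases hL : b₀ ∈ L
    · have := choice hb (ih hL fun b' hb' => h b' (by simp [hb']))
      split_ifs at this with hbb <;> simpa [PExp.firstOf, hbb] using this
    · obtain rfl : b₀ = b := by simpa [hL] using hb₀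
      have hrest : PegRec R (PExp.firstOf (L.map f)) x none :=
        firstOf_of_forall_none fun e he => by
          obtain ⟨b', hb', rfl⟩ := List.mem_map.mp he
          simpa [show b' ≠ b₀ from fun h => hL (h ▸ hb')] using h b' (by simp [hb'])
      simpa [PExp.firstOf] using choice hb hrest

theorem seqOf_map {β : Type} {f : β → PExp α ν} {P : β → Prop} {L : List β}
    (h : ∀ b ∈ L, PegRec R (f b) x (testResult (P b))) :
    PegRec R (PExp.seqOf (L.map f)) x (testResult (∀ b ∈ L, P b)) := by
  classical
  induction L with
  | nil => simpa [testResult] using .eps x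
  | cons b L ih =>
    have := seq_of_testResult (h b (by simp)) fun _ => ih fun b' hb' => h b' (by simp [hb'])
    rw [List.map_cons, PExp.seqOf]
    convert this using 1
    by_cases hb : P b <;> simp [testResult, hb]

theorem exists_of_grounded {P : ν → Prop} (hP : ∀ B, P B → ∃ r, PegRec R (.nt B) x r)
    (hshort : ∀ x' : List α, x'.length < x.length → ∀ e, ∃ r, PegRec R e x' r)
    (e : PExp α ν) (he : e.Grounded P) : ∃ r, PegRec R e x r := by
  induction e with
  | eps => exact ⟨_, .eps x⟩
  | fail => exact ⟨_, .fail x⟩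
  | term a => cases x with
    | nil => exact ⟨_, .termNil a⟩
    | cons b t => classical exact ⟨_, term_cons⟩
  | nt B => exact hP B he
  | notP e ih => obtain ⟨_, h⟩ := ih he; exact ⟨_, notP_testResult h⟩
  | andP e ih => obtain ⟨_, h⟩ := ih he; exact ⟨_, andP_map h⟩
  | choice e₁ e₂ ih₁ ih₂ =>
    obtain ⟨_, h₁⟩ := ih₁ he.1
    obtain ⟨_, h₂⟩ := ih₂ he.2
    exact ⟨_, choice h₁ h₂⟩
  | seq e₁ e₂ ih₁ ih₂ =>
    obtain ⟨r₁, h₁⟩ := ih₁ he.1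
    cases r₁ with
    | none => exact ⟨_, .seqFail₁ _ _ _ h₁⟩
    | some y =>
      obtain ⟨z, rfl⟩ := h₁.isPrefix
      -- after an empty match `e₂` runs on the same input, so it must be grounded
      have hz : ∃ r₂, PegRec R e₂ z r₂ := by
        by_cases hy : y = []
        · subst hy
          exact ih₂ (he.2.resolve_left fun hn => h₁.ne_nil_of_nonNullable hn rfl)
        · exact hshort z (by simpa using List.length_pos_iff.mpr hy) e₂
      obtain ⟨_, h₂⟩ := hz
      exact ⟨_, seq_append h₁ h₂⟩

end PegRec

theorem PEG.total_of_grounded {α : Type} (G : PEG α) (rank : G.ν → ℕ)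
    (hR : ∀ B, (G.R B).Grounded (rank · < rank B)) : G.Total := by
  intro e x
  induction hn : x.length using Nat.strong_induction_on generalizing x e with
  | _ n ih =>
    have hshort : ∀ x' : List α, x'.length < x.length → ∀ e, ∃ r, PegRec G.R e x' r :=
      fun x' hx' e => ih _ (hn ▸ hx') e x' rfl
    have hnt : ∀ B, ∃ r, PegRec G.R (.nt B) x r := by
      intro B
      induction hB : rank B using Nat.strong_induction_on generalizing B with
      | _ m ihB =>
        obtain ⟨r, h⟩ := PegRec.exists_of_grounded
          (fun B' hB' => ihB _ (hB ▸ hB') B' rfl) hshort (G.R B) (hR B)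
        exact ⟨r, .ntRule _ _ _ h⟩
    exact PegRec.exists_of_grounded (fun B _ => hnt B) hshort e e.grounded_true

namespace Nbhd

variable {d : ℕ} {Γ : Type}

def trunc : {m : ℕ} → Nbhd d Γ (m + 1) → Nbhd d Γ m
  | 0, M => M.1
  | _ + 1, M => (M.1, fun i => (M.2 i).map trunc)

variable (d Γ) in
def init : (m : ℕ) → Nbhd d Γ m
  | 0 => none
  | _ + 1 => (none, fun _ => none)

instance finite [Finite Γ] : ∀ m, Finite (Nbhd d Γ m)
  | 0 => inferInstanceAs (Finite (Option Γ))
  | m + 1 =>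
    have := finite m
    inferInstanceAs (Finite (Option Γ × (Fin d → Option (Nbhd d Γ m))))

end Nbhd

namespace Scaffold

variable {d k : ℕ} {Γ : Type} {S S' : Scaffold d Γ} {m u v : ℕ}

def AgreeUpTo (S S' : Scaffold d Γ) (v : ℕ) : Prop :=
  ∀ u ≤ v, S.label u = S'.label u ∧ S.edge u = S'.edge u

theorem AgreeUpTo.refl (S : Scaffold d Γ) (v : ℕ) : S.AgreeUpTo S v :=
  fun _ _ => ⟨rfl, rfl⟩

theorem AgreeUpTo.trans {S'' : Scaffold d Γ} (h : S.AgreeUpTo S' v) (h' : S'.AgreeUpTo S'' v) :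
    S.AgreeUpTo S'' v :=
  fun u hu => ⟨(h u hu).1.trans (h' u hu).1, (h u hu).2.trans (h' u hu).2⟩

theorem AgreeUpTo.mono {v' : ℕ} (h : S.AgreeUpTo S' v) (hv : v' ≤ v) : S.AgreeUpTo S' v' :=
  fun u hu => h u (hu.trans hv)

theorem AgreeUpTo.nbhd_eq (h : S.AgreeUpTo S' v) (hu : u ≤ v) : S.nbhd m u = S'.nbhd m u := by
  induction m generalizing u with
  | zero => exact (h u hu).1
  | succ m ih =>
    show (S.label u, fun i => (S.edge u i).map (S.nbhd m)) =
      (S'.label u, fun i => (S'.edge u i).map (S'.nbhd m))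
    rw [(h u hu).1, ← (h u hu).2]
    congr 1; funext i
    apply Option.map_congr
    intro w hw
    exact ih ((S.back u i w hw).trans hu)

theorem AgreeUpTo.follow_eq (h : S.AgreeUpTo S' v) (l : List (Fin d)) (hu : u ≤ v) :
    S.follow l u = S'.follow l u := by
  induction l generalizing u with
  | nil => rfl
  | cons i l ih =>
    simp only [follow, ← (h u hu).2]
    apply Option.bind_congr
    intro w hw
    exact ih ((S.back u i w hw).trans hu)

theorem trunc_nbhd (S : Scaffold d Γ) (m v : ℕ) : (S.nbhd (m + 1) v).trunc = S.nbhd m v := by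
  induction m generalizing v with
  | zero => rfl
  | succ m ih =>
    show (S.label v, fun i => ((S.edge v i).map (S.nbhd (m + 1))).map Nbhd.trunc) =
      (S.label v, fun i => (S.edge v i).map (S.nbhd m))
    congr 1; funext i
    rw [Option.map_map]
    apply Option.map_congr
    intro w _
    exact ih w

theorem init_nbhd (m v : ℕ) : (init d Γ).nbhd m v = Nbhd.init d Γ m := by
  cases m <;> rfl

theorem nbhd_succ_eq_of_trunc {M : Nbhd d Γ (m + 1)} (hlabel : M.1 = S.label v)
    (hedge : ∀ j, M.2 j = (S.edge v j).map fun w => if w = v then M.trunc else S.nbhd m w)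
    (htrunc : S.nbhd m v = M.trunc) : S.nbhd (m + 1) v = M := by
  refine Prod.ext hlabel.symm (funext fun j => ?_)
  rw [hedge j]
  refine Option.map_congr fun w _ => ?_
  split_ifs with hw
  · rw [hw, htrunc]
  · rfl

theorem nbhd_succ_eq_of {M : Nbhd d Γ (m + 1)} (hlabel : M.1 = S.label v)
    (hedge : ∀ j, M.2 j = (S.edge v j).map fun w => if w = v then M.trunc else S.nbhd m w) :
    S.nbhd (m + 1) v = M := by
  induction m with
  | zero => exact nbhd_succ_eq_of_trunc hlabel hedge hlabel.symm
  | succ m ih =>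
    refine nbhd_succ_eq_of_trunc hlabel hedge (ih hlabel fun j => ?_)
    show (M.2 j).map Nbhd.trunc = _
    rw [hedge j, Option.map_map]
    refine Option.map_congr fun w _ => ?_
    split_ifs with hw
    · simp [hw]
    · simp [hw, trunc_nbhd]

/-- A self-loop of `v` refers back to the truncation of the neighbourhood itself. -/
theorem nbhd_succ_eq_iff {M : Nbhd d Γ (m + 1)} :
    S.nbhd (m + 1) v = M ↔ M.1 = S.label v ∧
      ∀ j, M.2 j = (S.edge v j).map fun w => if w = v then M.trunc else S.nbhd m w := by
  refine ⟨?_, fun h => nbhd_succ_eq_of h.1 h.2⟩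
  rintro rfl
  refine ⟨rfl, fun j => Option.map_congr fun w _ => ?_⟩
  split_ifs with hw
  · rw [hw, trunc_nbhd]
  · rfl

def edgeTarget (S : Scaffold d Γ) : PathSpec d k → Option ℕ
  | .path l _ => S.follow l S.top
  | .self => some (S.top + 1)
  | .missing => none

theorem le_of_edgeTarget_eq_some {p : PathSpec d k} {w : ℕ} (h : S.edgeTarget p = some w) :
    w ≤ S.top + 1 := by
  rcases p with ⟨l, _⟩ | _ | _
  · exact (S.follow_le l S.top w h).trans S.top.le_succ
  · cases h; rfl
  · cases h

variable (S) (γ : Γ) (ps : Fin d → PathSpec d k)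

theorem extend_top : (S.extend γ ps).top = S.top + 1 := rfl

theorem extend_label_top : (S.extend γ ps).label (S.top + 1) = some γ := by
  simp [extend]

theorem extend_edge_top (j : Fin d) :
    (S.extend γ ps).edge (S.top + 1) j = S.edgeTarget (ps j) := by
  simp only [extend, if_true]
  cases ps j <;> rfl

theorem agreeUpTo_extend : S.AgreeUpTo (S.extend γ ps) S.top := by
  intro u hu
  refine ⟨?_, funext fun i => ?_⟩ <;> simp [extend, hu, show u ≠ S.top + 1 by omega]

theorem extend_nbhd_zero_top : (S.extend γ ps).nbhd 0 (S.top + 1) = some γ :=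
  extend_label_top S γ ps

theorem extend_nbhd_succ_top_eq_iff {M : Nbhd d Γ (m + 1)} :
    (S.extend γ ps).nbhd (m + 1) (S.top + 1) = M ↔ M.1 = some γ ∧
      ∀ j, M.2 j = (S.edgeTarget (ps j)).map
        fun w => if w = S.top + 1 then M.trunc else S.nbhd m w := by
  rw [nbhd_succ_eq_iff, extend_label_top]
  refine and_congr_right fun _ => forall_congr' fun j => ?_
  rw [extend_edge_top]
  refine Eq.congr_right (Option.map_congr fun w hw => ?_)
  split_ifs with h
  · rfl
  · have := S.le_of_edgeTarget_eq_some hw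
    exact ((S.agreeUpTo_extend γ ps).nbhd_eq (by omega)).symm

end Scaffold

namespace SAutomaton

variable {σ : Type} (A : SAutomaton σ)

theorem run_append_singleton (x : List σ) (a : σ) : A.run (x ++ [a]) = A.step a (A.run x) := by
  simp [run, List.foldl_append]

theorem run_top (x : List σ) : (A.run x).2.top = x.length := by
  induction x using List.reverseRecOn with
  | nil => rfl
  | append_singleton x a ih => simp [run_append_singleton, step, Scaffold.extend_top, ih]

theorem agreeUpTo_run_append (x y : List σ) :
    (A.run x).2.AgreeUpTo (A.run (x ++ y)).2 x.length := by
  induction y using List.reverseRecOn with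
  | nil => simpa using Scaffold.AgreeUpTo.refl _ _
  | append_singleton y a ih =>
    rw [← List.append_assoc, run_append_singleton]
    refine ih.trans ((Scaffold.agreeUpTo_extend _ _ _).mono ?_)
    simp [run_top]

end SAutomaton

noncomputable def univList (β : Type) [Finite β] : List β := (Finite.exists_univ_list β).choose

theorem mem_univList {β : Type} [Finite β] (b : β) : b ∈ univList β :=
  (Finite.exists_univ_list β).choose_spec.2 b

instance SAutomaton.finite_Q {σ : Type} (A : SAutomaton σ) : Finite A.Q := A.finQ

instance SAutomaton.finite_Γ {σ : Type} (A : SAutomaton σ) : Finite A.Γ := A.finΓ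

namespace ScaffoldPEG

variable {σ : Type} (A : SAutomaton σ)

/-- With `scaffold`, the configuration reached after reading `z` from right to left. Its nodes
`0, …, w` are those of the configuration of the suffix of `z` of length `w`. -/
def state (z : List σ) : A.Q := (A.run z.reverse).1

def scaffold (z : List σ) : Scaffold A.d A.Γ := (A.run z.reverse).2

abbrev Trigger : Type := A.Q × σ × Nbhd A.d A.Γ A.k

def trigger (a : σ) (t : List σ) : Trigger A := (state A t, a, (scaffold A t).nbhd A.k t.length)

def out (tr : Trigger A) : A.Q × A.Γ × (Fin A.d → PathSpec A.d A.k) := A.δ tr.1 tr.2.1 tr.2.2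

theorem state_nil : state A [] = A.q0 := rfl

theorem scaffold_nil : scaffold A [] = Scaffold.init A.d A.Γ := rfl

theorem scaffold_top (z : List σ) : (scaffold A z).top = z.length := by
  simp [scaffold, SAutomaton.run_top]

theorem run_reverse_cons (a : σ) (t : List σ) :
    A.run (a :: t).reverse = A.step a (A.run t.reverse) := by
  rw [List.reverse_cons, SAutomaton.run_append_singleton]

theorem state_cons (a : σ) (t : List σ) : state A (a :: t) = (out A (trigger A a t)).1 := by
  simp only [state, run_reverse_cons, SAutomaton.step, out, trigger, ← scaffold_top A t]
  rfl

theorem scaffold_cons (a : σ) (t : List σ) :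
    scaffold A (a :: t) =
      (scaffold A t).extend (out A (trigger A a t)).2.1 (out A (trigger A a t)).2.2 := by
  simp only [scaffold, run_reverse_cons, SAutomaton.step, out, trigger, ← scaffold_top A t]
  rfl

theorem agreeUpTo_scaffold_of_suffix {v z : List σ} (h : v <:+ z) :
    (scaffold A v).AgreeUpTo (scaffold A z) v.length := by
  obtain ⟨u, rfl⟩ := h
  simpa [scaffold] using A.agreeUpTo_run_append v.reverse u.reverse

theorem agreeUpTo_scaffold_drop (z : List σ) {w : ℕ} (hw : w ≤ z.length) :
    (scaffold A (z.drop (z.length - w))).AgreeUpTo (scaffold A z) w := by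
  have h := agreeUpTo_scaffold_of_suffix A (List.drop_suffix (z.length - w) z)
  rwa [List.length_drop, Nat.sub_sub_self hw] at h

/-- The prefix of `z` read between node `z.length` and node `w` of `scaffold A z`. -/
def toNode (z : List σ) (w : ℕ) : List σ := z.take (z.length - w)

theorem toNode_length (z : List σ) : toNode z z.length = [] := by
  simp [toNode]

theorem toNode_cons (a : σ) (t : List σ) {w : ℕ} (hw : w ≤ t.length) :
    toNode (a :: t) w = a :: toNode t w := by
  simp [toNode, Nat.succ_sub hw]

theorem toNode_append_toNode (z : List σ) {u w : ℕ} (hu : u ≤ w) (hw : w ≤ z.length) :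
    toNode z w ++ toNode (z.drop (z.length - w)) u = toNode z u := by
  rw [toNode, toNode, toNode, List.length_drop, Nat.sub_sub_self hw, ← List.take_add]
  congr 1
  omega

inductive NT : Type where
  | state (q : A.Q)
  | nbhd (m : ℕ) (M : Nbhd A.d A.Γ m) (hm : m ≤ A.k)
  | edge (i : Fin A.d)
  | path (l : List (Fin A.d)) (hl : l.length ≤ A.k)
  | rest
  | start

instance : Finite (NT A) := by
  have : Finite {l : List (Fin A.d) // l.length ≤ A.k} := (List.finite_length_le _ _).to_subtype
  refine Finite.of_injective (β := (A.Q ⊕ (Σ m : Fin (A.k + 1), Nbhd A.d A.Γ m)) ⊕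
      ((Fin A.d ⊕ {l : List (Fin A.d) // l.length ≤ A.k}) ⊕ Bool))
    (fun
      | .state q => .inl (.inl q)
      | .nbhd m M hm => .inl (.inr ⟨⟨m, by omega⟩, M⟩)
      | .edge i => .inr (.inl (.inl i))
      | .path l hl => .inr (.inl (.inr ⟨l, hl⟩))
      | .rest => .inr (.inr true)
      | .start => .inr (.inr false)) ?_
  intro B B' h
  cases B <;> cases B' <;> simp_all

/-- Reads the symbol of `tr`, checks that the configuration before it is the one of `tr`,
then runs `e`. -/
def step (tr : Trigger A) (e : PExp σ (NT A)) : PExp σ (NT A) :=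
  .seq (.term tr.2.1)
    (.seq (.andP (.nt (.state tr.1))) (.seq (.andP (.nt (.nbhd A.k tr.2.2 le_rfl))) e))

noncomputable def edgeCheck {m : ℕ} (hm : m + 1 ≤ A.k) (M : Nbhd A.d A.Γ (m + 1))
    (p : PathSpec A.d A.k) (j : Fin A.d) : PExp σ (NT A) :=
  match p, M.2 j with
  | .path l hl, some c => .andP (.seq (.nt (.path l hl)) (.nt (.nbhd m c (by omega))))
  | .path l hl, none => .notP (.nt (.path l hl))
  | .self, c => PExp.guard (c = some M.trunc) .eps
  | .missing, c => PExp.guard (c = none) .eps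

noncomputable def topCheck : (m : ℕ) → m ≤ A.k → Nbhd A.d A.Γ m → A.Γ →
    (Fin A.d → PathSpec A.d A.k) → PExp σ (NT A)
  | 0, _, M, γ, _ => PExp.guard (M = some γ) .eps
  | _ + 1, hm, M, γ, ps =>
    PExp.guard (M.1 = some γ)
      (PExp.seqOf ((List.finRange A.d).map fun j => edgeCheck A hm M (ps j) j))

def edgeMove (tr : Trigger A) (i : Fin A.d) : PExp σ (NT A) :=
  match (out A tr).2.2 i with
  | .path l hl => .seq (.term tr.2.1) (.nt (.path l hl))
  | .self => .eps
  | .missing => .fail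

def rank : NT A → ℕ
  | .path l _ => l.length + 1
  | .rest => 1
  | .start => 2
  | _ => 0

section

variable {P : NT A → Prop}

theorem grounded_step (tr : Trigger A) (e : PExp σ (NT A)) : (step A tr e).Grounded P :=
  ⟨trivial, .inl trivial⟩

theorem grounded_edgeMove (tr : Trigger A) (i : Fin A.d) : (edgeMove A tr i).Grounded P := by
  unfold edgeMove
  split
  · exact ⟨trivial, .inl trivial⟩
  all_goals trivial

end

variable [Fintype σ]

noncomputable def anyChar : PExp σ (NT A) := PExp.firstOf ((univList σ).map .term)

noncomputable def anyTrigger (f : Trigger A → PExp σ (NT A)) : PExp σ (NT A) :=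
  PExp.firstOf ((univList (Trigger A)).map f)

/-- Holds at the initial configuration iff `init` does, and otherwise iff the branch `f tr` of the
trigger `tr` of the last step succeeds. -/
noncomputable def configTest (init : Prop) (f : Trigger A → PExp σ (NT A)) : PExp σ (NT A) :=
  .andP (.choice (PExp.guard init (.notP (anyChar A))) (anyTrigger A f))

noncomputable def rules : NT A → PExp σ (NT A)
  | .state q => configTest A (q = A.q0) fun tr => PExp.guard ((out A tr).1 = q) (step A tr .eps)
  | .nbhd m M hm => configTest A (M = Nbhd.init A.d A.Γ m) fun tr =>
      step A tr (topCheck A m hm M (out A tr).2.1 (out A tr).2.2)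
  | .edge i => anyTrigger A fun tr => .seq (.andP (step A tr .eps)) (edgeMove A tr i)
  | .path [] _ => .eps
  | .path (i :: l) h => .seq (.nt (.edge i)) (.nt (.path l (Nat.le_of_succ_le h)))
  | .rest => .choice (.seq (anyChar A) (.nt .rest)) .eps
  | .start =>
    .seq (PExp.firstOf ((univList A.Q).map fun q => PExp.guard (q ∈ A.F) (.nt (.state q))))
      (.nt .rest)

open Classical in
noncomputable def spec : NT A → List σ → Option (List σ)
  | .state q, z => testResult (state A z = q)
  | .nbhd m M _, z => testResult ((scaffold A z).nbhd m z.length = M)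
  | .edge i, z => ((scaffold A z).edge z.length i).map (toNode z)
  | .path l _, z => ((scaffold A z).follow l z.length).map (toNode z)
  | .rest, z => some z
  | .start, z => if state A z ∈ A.F then some z else none

def SpecHolds (z : List σ) : Prop := ∀ B, PegRec (rules A) (.nt B) z (spec A B z)

section Grounded

variable {P : NT A → Prop}

theorem grounded_anyChar : (anyChar A).Grounded P :=
  PExp.grounded_firstOf fun e he => by obtain ⟨a, _, rfl⟩ := List.mem_map.mp he; trivial

theorem nonNullable_anyChar : (anyChar A).NonNullable :=
  PExp.nonNullable_firstOf fun e he => by obtain ⟨a, _, rfl⟩ := List.mem_map.mp he; trivial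

theorem grounded_anyTrigger {f : Trigger A → PExp σ (NT A)} (hf : ∀ tr, (f tr).Grounded P) :
    (anyTrigger A f).Grounded P :=
  PExp.grounded_firstOf fun e he => by obtain ⟨tr, _, rfl⟩ := List.mem_map.mp he; exact hf tr

theorem grounded_configTest {c : Prop} {f : Trigger A → PExp σ (NT A)}
    (hf : ∀ tr, (f tr).Grounded P) : (configTest A c f).Grounded P :=
  ⟨PExp.grounded_guard (grounded_anyChar A), grounded_anyTrigger A hf⟩

end Grounded

theorem rules_grounded (B : NT A) : (rules A B).Grounded (rank A · < rank A B) := by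
  cases B with
  | state q => exact grounded_configTest A fun tr => PExp.grounded_guard (grounded_step A tr _)
  | nbhd m M hm => exact grounded_configTest A fun tr => grounded_step A tr _
  | edge i =>
    exact grounded_anyTrigger A fun tr =>
      ⟨grounded_step A tr _, .inr (grounded_edgeMove A tr i)⟩
  | path l hl =>
    cases l with
    | nil => trivial
    | cons i l => exact ⟨by simp [PExp.Grounded, rank], .inr (by simp [PExp.Grounded, rank])⟩
  | rest => exact ⟨⟨grounded_anyChar A, .inl (nonNullable_anyChar A)⟩, trivial⟩
  | start =>
    refine ⟨PExp.grounded_firstOf fun e he => ?_, .inr (by simp [PExp.Grounded, rank])⟩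
    obtain ⟨q, _, rfl⟩ := List.mem_map.mp he
    exact PExp.grounded_guard (by simp [PExp.Grounded, rank])

open Classical

theorem anyChar_nil : PegRec (rules A) (anyChar A) [] none :=
  PegRec.firstOf_of_forall_none fun e he => by
    obtain ⟨b, _, rfl⟩ := List.mem_map.mp he
    exact .termNil b

theorem anyChar_cons (a : σ) (t : List σ) : PegRec (rules A) (anyChar A) (a :: t) (some [a]) :=
  PegRec.firstOf_map_of_unique (mem_univList a) fun _ _ => PegRec.term_cons

variable {A}

theorem anyTrigger_nil {f : Trigger A → PExp σ (NT A)}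
    (hf : ∀ tr, PegRec (rules A) (f tr) [] none) :
    PegRec (rules A) (anyTrigger A f) [] none :=
  PegRec.firstOf_of_forall_none fun e he => by
    obtain ⟨tr, _, rfl⟩ := List.mem_map.mp he
    exact hf tr

theorem anyTrigger_cons {f : Trigger A → PExp σ (NT A)} {a : σ} {t : List σ}
    {r : Trigger A → Option (List σ)}
    (hf : ∀ tr, PegRec (rules A) (f tr) (a :: t) (if tr = trigger A a t then r tr else none)) :
    PegRec (rules A) (anyTrigger A f) (a :: t) (r (trigger A a t)) :=
  PegRec.firstOf_map_of_unique (mem_univList _) fun tr _ => hf tr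

theorem configTest_nil {c : Prop} {f : Trigger A → PExp σ (NT A)}
    (hf : ∀ tr, PegRec (rules A) (f tr) [] none) :
    PegRec (rules A) (configTest A c f) [] (testResult c) := by
  have := ((PegRec.guard (c := c) fun _ => (anyChar_nil A).notP_testResult).choice
    (anyTrigger_nil hf)).andP_map
  unfold configTest
  by_cases hc : c <;> simpa [testResult, hc] using this

theorem configTest_cons {c : Prop} {f : Trigger A → PExp σ (NT A)} {a : σ} {t : List σ}
    {r : Trigger A → Option (List σ)}
    (hf : ∀ tr, PegRec (rules A) (f tr) (a :: t) (if tr = trigger A a t then r tr else none)) :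
    PegRec (rules A) (configTest A c f) (a :: t) ((r (trigger A a t)).map fun _ => []) := by
  have := ((PegRec.guard (c := c) fun _ => (anyChar_cons A a t).notP_testResult).choice
    (anyTrigger_cons hf)).andP_map
  unfold configTest
  by_cases hc : c <;> simpa [testResult, hc] using this

theorem step_nil (tr : Trigger A) (e : PExp σ (NT A)) : PegRec (rules A) (step A tr e) [] none :=
  .seqFail₁ _ _ _ (.termNil _)

theorem step_cons {a : σ} {t : List σ} (ht : SpecHolds A t) {e : PExp σ (NT A)}
    {r : Option (List σ)} (he : PegRec (rules A) e t r) (tr : Trigger A) :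
    PegRec (rules A) (step A tr e) (a :: t)
      (if tr = trigger A a t then r.map (a :: ·) else none) := by
  obtain ⟨q, b, N⟩ := tr
  have hcheck := PegRec.seq_of_testResult (ht (.state q)).andP_testResult fun _ =>
    PegRec.seq_of_testResult (ht (.nbhd A.k N le_rfl)).andP_testResult fun _ => he
  by_cases hb : b = a
  · subst hb
    have h : PegRec (rules A) (step A (q, b, N) e) (b :: t) _ :=
      PegRec.seq_append (y := [b]) (.termOk b t) hcheck
    convert h using 1
    simp only [trigger, Prod.mk.injEq, true_and]
    rcases eq_or_ne q (state A t) with rfl | hq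
    · rcases eq_or_ne N ((scaffold A t).nbhd A.k t.length) with rfl | hN
      · simp
      · simp [hN, hN.symm]
    · simp [hq, hq.symm]
  · simpa [trigger, hb] using .seqFail₁ _ _ _ (.termMismatch b a t hb)

theorem edgeCheck_spec {t : List σ}
    (ih : ∀ t' : List σ, t'.length ≤ t.length → SpecHolds A t')
    {m : ℕ} (hm : m + 1 ≤ A.k) (M : Nbhd A.d A.Γ (m + 1)) (p : PathSpec A.d A.k) (j : Fin A.d) :
    PegRec (rules A) (edgeCheck A hm M p j) t (testResult (M.2 j = ((scaffold A t).edgeTarget p).map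
      fun w => if w = (scaffold A t).top + 1 then M.trunc else (scaffold A t).nbhd m w)) := by
  rcases p with ⟨l, hl⟩ | _ | _
  · have hpath : PegRec (rules A) (.nt (.path l hl)) t
        (((scaffold A t).follow l t.length).map (toNode t)) := ih t le_rfl _
    rw [← scaffold_top] at hpath
    cases hc : M.2 j with
    | none =>
      simpa [edgeCheck, hc, Scaffold.edgeTarget, eq_comm] using hpath.notP_testResult
    | some c =>
      simp only [edgeCheck, hc, Scaffold.edgeTarget]
      cases hw : (scaffold A t).follow l (scaffold A t).top with
      | none =>
        rw [hw] at hpath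
        simpa [testResult] using (PegRec.seqFail₁ _ (.nt (.nbhd m c (by omega))) _ hpath).andP_map
      | some w =>
        rw [hw] at hpath
        have hwt : w ≤ t.length := scaffold_top A t ▸ (scaffold A t).follow_le l _ w hw
        have hnbhd : PegRec (rules A) (.nt (.nbhd m c (by omega))) (t.drop (t.length - w))
            (testResult ((scaffold A t).nbhd m w = c)) := by
          have h := ih (t.drop (t.length - w)) (by simp) (.nbhd m c (by omega))
          rwa [spec, List.length_drop, Nat.sub_sub_self hwt,
            (agreeUpTo_scaffold_drop A t hwt).nbhd_eq le_rfl] at h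
        have := (PegRec.seq_take hpath hnbhd).andP_map
        simpa [testResult, eq_comm, show w ≠ (scaffold A t).top + 1 by rw [scaffold_top]; omega,
          apply_ite] using this
  · simpa [edgeCheck, Scaffold.edgeTarget] using PegRec.guard_eps (c := M.2 j = some M.trunc)
  · simpa [edgeCheck, Scaffold.edgeTarget] using PegRec.guard_eps (c := M.2 j = none)

theorem topCheck_spec {t : List σ}
    (ih : ∀ t' : List σ, t'.length ≤ t.length → SpecHolds A t') (m : ℕ) (hm : m ≤ A.k)
    (M : Nbhd A.d A.Γ m) (γ : A.Γ) (ps : Fin A.d → PathSpec A.d A.k) :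
    PegRec (rules A) (topCheck A m hm M γ ps) t
      (testResult (((scaffold A t).extend γ ps).nbhd m ((scaffold A t).top + 1) = M)) := by
  cases m with
  | zero =>
    rw [Scaffold.extend_nbhd_zero_top]
    show PegRec (rules A) (PExp.eps.guard (M = some γ)) t _
    convert PegRec.guard_eps using 2
    exact eq_comm
  | succ m =>
    rw [Scaffold.extend_nbhd_succ_top_eq_iff]
    have hchecks := PegRec.seqOf_map (L := List.finRange A.d) fun j _ =>
      edgeCheck_spec ih hm M (ps j) j
    have := PegRec.guard (c := M.1 = some γ) fun _ => hchecks
    by_cases hγ : M.1 = some γ <;> simpa [topCheck, testResult, hγ] using this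

theorem nbhd_spec (z : List σ) (ih : ∀ z' : List σ, z'.length < z.length → SpecHolds A z')
    (m : ℕ) (hm : m ≤ A.k) (M : Nbhd A.d A.Γ m) :
    PegRec (rules A) (.nt (.nbhd m M hm)) z (spec A (.nbhd m M hm) z) := by
  refine .ntRule _ _ _ ?_
  cases z with
  | nil =>
    simpa [rules, spec, scaffold_nil, Scaffold.init_nbhd, eq_comm] using
      configTest_nil (c := M = Nbhd.init A.d A.Γ m) fun tr => step_nil tr _
  | cons a t =>
    have ht : ∀ t' : List σ, t'.length ≤ t.length → SpecHolds A t' :=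
      fun t' h => ih t' (by simp; omega)
    have := configTest_cons (c := M = Nbhd.init A.d A.Γ m) (a := a) fun tr =>
      step_cons (ht t le_rfl) (topCheck_spec ht m hm M (out A tr).2.1 (out A tr).2.2) tr
    rw [rules, spec, scaffold_cons, List.length_cons, ← scaffold_top A t]
    simpa [testResult, apply_ite] using this

theorem state_spec (z : List σ) (ih : ∀ z' : List σ, z'.length < z.length → SpecHolds A z')
    (q : A.Q) : PegRec (rules A) (.nt (.state q)) z (spec A (.state q) z) := by
  refine .ntRule _ _ _ ?_
  cases z with
  | nil =>
    have := configTest_nil (c := q = A.q0)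
      (f := fun tr => PExp.guard ((out A tr).1 = q) (step A tr .eps))
      fun tr => by simpa using PegRec.guard (c := (out A tr).1 = q) fun _ => step_nil tr .eps
    rw [rules, spec, state_nil]
    convert this using 2
    exact eq_comm
  | cons a t =>
    have := configTest_cons (c := q = A.q0) (a := a) (t := t)
      (f := fun tr => PExp.guard ((out A tr).1 = q) (step A tr .eps))
      (r := fun tr => if (out A tr).1 = q then some [a] else none) fun tr => by
        have h := PegRec.guard (c := (out A tr).1 = q) fun _ =>
          step_cons (a := a) (ih t (by simp)) (.eps t) tr
        by_cases htr : tr = trigger A a t <;> simpa [htr] using h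
    rw [rules, spec, state_cons]
    simpa [testResult, apply_ite] using this

theorem edgeMove_spec {a : σ} {t : List σ} (ht : SpecHolds A t) (i : Fin A.d) :
    PegRec (rules A) (edgeMove A (trigger A a t) i) (a :: t)
      (((scaffold A t).edgeTarget ((out A (trigger A a t)).2.2 i)).map (toNode (a :: t))) := by
  unfold edgeMove
  rcases (out A (trigger A a t)).2.2 i with ⟨l, hl⟩ | _ | _
  · have h : PegRec (rules A) (.seq (.term (trigger A a t).2.1) (.nt (.path l hl))) (a :: t) _ :=
      PegRec.seq_append (y := [a]) (.termOk a t) (ht (.path l hl))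
    simp only [spec, Option.map_map] at h
    convert h using 1
    simp only [Scaffold.edgeTarget, scaffold_top, Function.comp_def, List.singleton_append]
    refine Option.map_congr fun w hw => toNode_cons a t ?_
    exact scaffold_top A t ▸ (scaffold A t).follow_le l _ w (scaffold_top A t ▸ hw)
  · simpa [Scaffold.edgeTarget, scaffold_top, toNode] using .eps (a :: t)
  · exact .fail _

theorem edge_spec (z : List σ) (ih : ∀ z' : List σ, z'.length < z.length → SpecHolds A z')
    (i : Fin A.d) : PegRec (rules A) (.nt (.edge i)) z (spec A (.edge i) z) := by
  refine .ntRule _ _ _ ?_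
  cases z with
  | nil => exact anyTrigger_nil fun tr => .seqFail₁ _ _ _ (step_nil tr _).andP_map
  | cons a t =>
    have ht := ih t (by simp)
    rw [rules, spec, scaffold_cons, List.length_cons, ← scaffold_top A t,
      Scaffold.extend_edge_top]
    refine anyTrigger_cons (A := A)
      (r := fun tr => ((scaffold A t).edgeTarget ((out A tr).2.2 i)).map (toNode (a :: t)))
      fun tr => ?_
    have hstep := (step_cons (a := a) ht (.eps t) tr).andP_map
    by_cases htr : tr = trigger A a t
    · subst htr
      simpa [Function.comp_def] using
        PegRec.seq_append (y := []) (by simpa using hstep) (edgeMove_spec ht i)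
    · simpa [htr] using .seqFail₁ _ _ _ (by simpa [htr] using hstep)

theorem path_spec (z : List σ) (ih : ∀ z' : List σ, z'.length < z.length → SpecHolds A z')
    (hedge : ∀ i, PegRec (rules A) (.nt (.edge i)) z (spec A (.edge i) z))
    (l : List (Fin A.d)) (hl : l.length ≤ A.k) :
    PegRec (rules A) (.nt (.path l hl)) z (spec A (.path l hl) z) := by
  refine .ntRule _ _ _ ?_
  induction l with
  | nil => simpa [rules, spec, Scaffold.follow, toNode_length] using .eps z
  | cons i l ihl =>
    have hi := hedge i
    rw [rules, spec, Scaffold.follow]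
    rw [spec] at hi
    cases hw : (scaffold A z).edge z.length i with
    | none => exact .seqFail₁ _ _ _ (by simpa [hw] using hi)
    | some w =>
      have hwz : w ≤ z.length := (scaffold A z).back _ _ _ hw
      have hl' : l.length ≤ A.k := Nat.le_of_succ_le hl
      have hrest : PegRec (rules A) (.nt (.path l hl')) (z.drop (z.length - w))
          (((scaffold A z).follow l w).map (toNode (z.drop (z.length - w)))) := by
        have h : PegRec (rules A) (.nt (.path l hl')) (z.drop (z.length - w))
            (spec A (.path l hl') (z.drop (z.length - w))) := by
          rcases hwz.eq_or_lt with rfl | hlt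
          · simpa using .ntRule _ _ _ (ihl hl')
          · exact ih _ (by simp; omega) _
        rwa [spec, List.length_drop, Nat.sub_sub_self hwz,
          (agreeUpTo_scaffold_drop A z hwz).follow_eq l le_rfl] at h
      have := PegRec.seq_take (n := z.length - w) (by simpa [hw, toNode] using hi) hrest
      simp only [Option.bind_some, Option.map_map] at this ⊢
      convert this using 1
      refine Option.map_congr fun u hu => ?_
      exact (toNode_append_toNode z ((scaffold A z).follow_le l w u hu) hwz).symm

theorem rest_spec (z : List σ) (ih : ∀ z' : List σ, z'.length < z.length → SpecHolds A z') :
    PegRec (rules A) (.nt .rest) z (spec A .rest z) := by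
  refine .ntRule _ _ _ ?_
  cases z with
  | nil => exact .choice₂ _ _ _ _ (.seqFail₁ _ _ _ (anyChar_nil A)) (.eps [])
  | cons a t =>
    exact .choice₁ _ _ _ _
      (PegRec.seq_append (y := [a]) (anyChar_cons A a t) (ih t (by simp) .rest))

theorem start_spec (z : List σ)
    (hstate : ∀ q, PegRec (rules A) (.nt (.state q)) z (spec A (.state q) z))
    (hrest : PegRec (rules A) (.nt .rest) z (spec A .rest z)) :
    PegRec (rules A) (.nt .start) z (spec A .start z) := by
  refine .ntRule _ _ _ ?_
  have hacc := PegRec.firstOf_map_of_unique (R := rules A) (x := z) (b₀ := state A z)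
    (r := fun q => testResult (q ∈ A.F)) (f := fun q => PExp.guard (q ∈ A.F) (.nt (NT.state q)))
    (mem_univList _) fun q _ => by
      have := PegRec.guard (c := q ∈ A.F) fun _ => hstate q
      rcases eq_or_ne q (state A z) with rfl | hq
      · by_cases hF : state A z ∈ A.F <;> simpa [spec, testResult, hF] using this
      · simpa [spec, testResult, hq, hq.symm] using this
  simpa [rules, spec] using PegRec.seq_of_testResult hacc fun _ => hrest

variable (A) in
theorem specHolds (z : List σ) : SpecHolds A z := by
  induction hn : z.length using Nat.strong_induction_on generalizing z with
  | _ n ihn =>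
    have ih : ∀ z' : List σ, z'.length < z.length → SpecHolds A z' :=
      fun z' h => ihn _ (hn ▸ h) z' rfl
    have hedge := edge_spec z ih
    have hrest := rest_spec z ih
    intro B
    cases B with
    | state q => exact state_spec z ih q
    | nbhd m M hm => exact nbhd_spec z ih m hm M
    | edge i => exact hedge i
    | path l hl => exact path_spec z ih hedge l hl
    | rest => exact hrest
    | start => exact start_spec z (state_spec z ih) hrest

end ScaffoldPEG

/-- For every scaffolding automaton `A` over a finite alphabet `Σ`
there is a total PEG recognising exactly the reversal of the language decided
by `A`. -/
theorem scaffolding_to_peg (σ : Type) [Fintype σ] (A : SAutomaton σ) :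
    ∃ G : PEG σ, G.Total ∧ G.Lang = { x : List σ | x.reverse ∈ A.Lang } := by
  classical
  let G : PEG σ := ⟨ScaffoldPEG.NT A, inferInstance, ScaffoldPEG.rules A, .start⟩
  refine ⟨G, G.total_of_grounded (ScaffoldPEG.rank A) (ScaffoldPEG.rules_grounded A), ?_⟩
  ext x
  have hstart : PegRec G.R (.nt G.S) x (if x.reverse ∈ A.Lang then some x else none) :=
    ScaffoldPEG.specHolds A x .start
  constructor
  · intro hx
    have h := PegRec.unique hx hstart
    split_ifs at h with hF
    exact hF
  · rintro (hF : x.reverse ∈ A.Lang)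
    rwa [if_pos hF] at hstart
end

section
/- For the language K over the alphabet {0,1,#} and for every D ∈ ℕ, the number of (K, (D+1)·2^D, D)-equivalence classes satisfies E_K((D+1)·2^D, D) ≥ 2^(2^D). -/
/-! ## Online Turing machines and the equivalence-class counting method -/

/-- A head move of a Turing machine. -/
inductive TMMove : Type where
  | left : TMMove
  | stay : TMMove
  | right : TMMove

/-- The displacement of a head move. -/
def TMMove.offset : TMMove → ℤ
  | .left => -1
  | .stay => 0
  | .right => 1

/-- The shortest (most-significant-bit-first) binary representation of a
natural number, as a list of booleans; by convention `0` is represented by `"0"`. -/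
def natBinRep (n : ℕ) : List Bool :=
  if n = 0 then [false] else (Nat.bits n).reverse

/-- An online (multi-tape) Turing machine with input alphabet `σ`: it has
`tapes + 1` work tapes (tape `0` being the auxiliary tape that initially holds
the input length in binary), and a one-way read-only input tape.  At each step
the transition function sees the current state, the input symbol under the
input head (`none` when past the end of the input) and the symbols under the
work-tape heads, and produces a new state, a flag telling whether to advance
the input head (thereby reading a new input symbol), and a write/move action
for each work tape. -/
structure OnlineTM (σ : Type) : Type 1 where
  Q : Type
  finQ : Finite Q
  Γ : Type
  finΓ : Finite Γ
  blank : Γ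
  sym0 : Γ
  sym1 : Γ
  tapes : ℕ
  q0 : Q
  Halt : Set Q
  F : Set Q
  δ : Q → Option σ → (Fin (tapes + 1) → Γ) →
        Q × Bool × (Fin (tapes + 1) → Γ × TMMove)

/-- A configuration of an online Turing machine. -/
structure OCfg {σ : Type} (M : OnlineTM σ) : Type where
  q : M.Q
  ipos : ℕ
  hd : Fin (M.tapes + 1) → ℤ
  tape : Fin (M.tapes + 1) → ℤ → M.Γ

/-- The initial configuration on an input of length `n`: initial state, input
head at the start, work tapes blank except the auxiliary tape `0`, which holds
the binary representation of `n` in cells `0, …`. -/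
def OnlineTM.initCfg {σ : Type} (M : OnlineTM σ) (n : ℕ) : OCfg M :=
  { q := M.q0
    ipos := 0
    hd := fun _ => 0
    tape := fun i p =>
      if i = 0 ∧ 0 ≤ p ∧ p < (natBinRep n).length then
        (if (natBinRep n).getD p.toNat false then M.sym1 else M.sym0)
      else M.blank }

open scoped Classical in
/-- A single computation step of an online Turing machine on input `x`
(halting states are absorbing). -/
noncomputable def OnlineTM.stepCfg {σ : Type} (M : OnlineTM σ) (x : List σ)
    (c : OCfg M) : OCfg M :=
  if c.q ∈ M.Halt then c
  else
    let t := M.δ c.q x[c.ipos]? (fun i => c.tape i (c.hd i))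
    { q := t.1
      ipos := if t.2.1 then c.ipos + 1 else c.ipos
      hd := fun i => c.hd i + (t.2.2 i).2.offset
      tape := fun i p => if p = c.hd i then (t.2.2 i).1 else c.tape i p }

/-- The configuration of `M` on input `x` after `i` steps. -/
noncomputable def OnlineTM.runCfg {σ : Type} (M : OnlineTM σ) (x : List σ)
    (i : ℕ) : OCfg M :=
  (M.stepCfg x)^[i] (M.initCfg x.length)

/-- `M` decides `L` doing at most `t(n)` steps of computation per input symbol:
on every input `x` of length `n`, the machine halts after having read the whole
input, it accepts iff `x ∈ L`, and during the computation the input head never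
stays put for more than `t(n)` consecutive steps (i.e. at most `t(n)` steps are
performed between consecutive readings of input symbols, before the first
reading and after the last one). -/
def OnlineTM.DecidesIn {σ : Type} (M : OnlineTM σ) (L : Set (List σ))
    (t : ℕ → ℕ) : Prop :=
  ∀ x : List σ, ∃ N : ℕ,
    (M.runCfg x N).q ∈ M.Halt ∧
    (∀ i < N, (M.runCfg x i).q ∉ M.Halt) ∧
    (M.runCfg x N).ipos = x.length ∧
    ((M.runCfg x N).q ∈ M.F ↔ x ∈ L) ∧
    (∀ i j : ℕ, i ≤ j → j ≤ N →
      (M.runCfg x i).ipos = (M.runCfg x j).ipos → j - i ≤ t x.length)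

/-- The class `Online(t(n))` of languages over `σ` decidable by an online
Turing machine doing at most `t(n)` steps of computation per input symbol. -/
def OnlineClass (σ : Type) (t : ℕ → ℕ) : Set (Set (List σ)) :=
  { L | ∃ M : OnlineTM σ, M.DecidesIn L t }

/-- `(L,ℓ,m)`-equivalence (the parameter `ℓ` is implicit in the domain):
`y₁ ≡ y₂` iff appending any string of length `m` leads to the same
membership in `L`. -/
def LEquiv {σ : Type} (L : Set (List σ)) (m : ℕ) (y₁ y₂ : List σ) : Prop :=
  ∀ x : List σ, x.length = m → (y₁ ++ x ∈ L ↔ y₂ ++ x ∈ L)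

/-- `E_L(ℓ,m)`: the number of equivalence classes of strings of length `ℓ`
under `(L,ℓ,m)`-equivalence. -/
noncomputable def numClasses {σ : Type} (L : Set (List σ)) (ℓ m : ℕ) : ℕ :=
  Nat.card (Quot (fun y₁ y₂ : { y : List σ // y.length = ℓ } =>
    LEquiv L m y₁.1 y₂.1))

/-- `t(n) ∈ o(n/(log n)²)`, i.e. `t(n)·(log n)²/n → 0` as `n → ∞`. -/
def LittleOOfNOverLogSq (t : ℕ → ℕ) : Prop :=
  Filter.Tendsto (fun n : ℕ => (t n : ℝ) * (Real.log n) ^ 2 / n)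
    Filter.atTop (nhds 0)

/-- The three-symbol alphabet `{0, 1, #}`. -/
inductive HSym : Type where
  | b0 : HSym
  | b1 : HSym
  | hash : HSym
  deriving DecidableEq

instance : Fintype HSym :=
  ⟨{HSym.b0, HSym.b1, HSym.hash}, by intro x; cases x <;> simp⟩

/-- A string over `{0,1,#}` is *binary* if it contains no `#`. -/
def HSym.IsBin (w : List HSym) : Prop := HSym.hash ∉ w

/-- The language `K = { w₁#w₂#⋯#w_N#x : N ≥ 1, w₁,…,w_N,x ∈ {0,1}*, ∃ i, xʳ = wᵢ }`
over the alphabet `{0,1,#}`. -/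
def LangK : Set (List HSym) :=
  { s | ∃ (ws : List (List HSym)) (x : List HSym),
      ws ≠ [] ∧ (∀ w ∈ ws, HSym.IsBin w) ∧ HSym.IsBin x ∧
      s = (ws.map (fun w => w ++ [HSym.hash])).flatten ++ x ∧
      x.reverse ∈ ws }

/-!
A set `S` of `D`-bit words is encoded by the string of length `(D + 1) · 2 ^ D` that lists, for
each `D`-bit word `u` in turn, either `u#` (when `u ∈ S`) or `#^(D+1)`. A string
`w₁#⋯#w_N#x` with `#`-free pieces determines its pieces (split it at `#`), so appending the
reversal of a `D`-bit word `u` to the code of `S` gives a word of `K` exactly when `u ∈ S`.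
Hence distinct sets have inequivalent codes. For `D = 0` the two classes are those of `#` and `0`.
-/

theorem LEquiv.equivalence {σ : Type} (L : Set (List σ)) (m : ℕ) :
    Equivalence (LEquiv L m) where
  refl _ _ _ := Iff.rfl
  symm h x hx := (h x hx).symm
  trans h₁ h₂ x hx := (h₁ x hx).trans (h₂ x hx)

theorem card_le_numClasses {σ α : Type} [Finite σ] {L : Set (List σ)} {ℓ m : ℕ}
    (f : α → List σ) (hf : ∀ a, (f a).length = ℓ)
    (hsep : ∀ a b, LEquiv L m (f a) (f b) → a = b) :
    Nat.card α ≤ numClasses L ℓ m := by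
  have : Finite { y : List σ // y.length = ℓ } := (List.finite_length_eq σ ℓ).to_subtype
  refine Nat.card_le_card_of_injective (fun a => Quot.mk _ ⟨f a, hf a⟩) fun a b hab => ?_
  exact hsep a b <|
    ((LEquiv.equivalence L m).comap Subtype.val).eqvGen_iff.mp (Quot.eqvGen_exact hab)

/-- The prefix `w₁#w₂#⋯#w_N#` of a word of `K`. -/
def hashJoin (ws : List (List HSym)) : List HSym :=
  (ws.map (· ++ [HSym.hash])).flatten

@[simp]
theorem hashJoin_nil : hashJoin [] = [] := rfl

@[simp]
theorem hashJoin_cons (w : List HSym) (ws : List (List HSym)) :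
    hashJoin (w :: ws) = w ++ HSym.hash :: hashJoin ws := by
  simp [hashJoin]

theorem hashJoin_replicate_nil (n : ℕ) :
    hashJoin (List.replicate n []) = List.replicate n HSym.hash := by
  induction n with
  | zero => rfl
  | succ n ih => simp [List.replicate_succ, ih]

theorem hashJoin_flatMap {α : Type} (l : List α) (f : α → List (List HSym)) :
    hashJoin (l.flatMap f) = l.flatMap (hashJoin ∘ f) := by
  simp [hashJoin, List.flatMap, List.map_flatten, List.flatten_flatten, Function.comp_def]

theorem splitOn_hashJoin_append {ws : List (List HSym)} {x : List HSym}
    (hws : ∀ w ∈ ws, HSym.IsBin w) (hx : HSym.IsBin x) :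
    (hashJoin ws ++ x).splitOn HSym.hash = ws ++ [x] := by
  induction ws with
  | nil => exact List.splitOn_eq_singleton hx
  | cons w ws ih =>
    rw [List.forall_mem_cons] at hws
    rw [hashJoin_cons, List.append_assoc, List.cons_append,
      List.splitOn_append_cons_self_of_not_mem hws.1, ih hws.2, List.cons_append]

theorem hashJoin_append_mem_LangK_iff {ws : List (List HSym)} {x : List HSym}
    (hws : ∀ w ∈ ws, HSym.IsBin w) (hx : HSym.IsBin x) :
    hashJoin ws ++ x ∈ LangK ↔ ws ≠ [] ∧ x.reverse ∈ ws := by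
  refine ⟨?_, fun ⟨hne, hmem⟩ => ⟨ws, x, hne, hws, hx, rfl, hmem⟩⟩
  rintro ⟨ws', x', hne, hws', hx', heq, hmem⟩
  have hsplit := congrArg (List.splitOn HSym.hash) heq
  rw [splitOn_hashJoin_append hws hx] at hsplit
  obtain ⟨rfl, hxx'⟩ := List.append_inj' (hsplit.trans (splitOn_hashJoin_append hws' hx')) rfl
  cases List.singleton_inj.mp hxx'
  exact ⟨hne, hmem⟩

theorem two_le_numClasses_LangK_one_zero : 2 ≤ numClasses LangK 1 0 := by
  have hmem : ∀ b : Bool, (if b then [HSym.hash] else [HSym.b0]) ∈ LangK ↔ b := by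
    rintro (_ | _)
    · simpa using hashJoin_append_mem_LangK_iff (ws := []) (x := [HSym.b0]) (by simp)
        (by simp [HSym.IsBin])
    · simpa using hashJoin_append_mem_LangK_iff (ws := [[]]) (x := []) (by simp [HSym.IsBin])
        (by simp [HSym.IsBin])
  simpa using card_le_numClasses (fun b : Bool => if b then [HSym.hash] else [HSym.b0])
    (fun b => by cases b <;> rfl) fun a b h => by
      simpa [hmem] using h [] rfl

def HSym.ofBool (b : Bool) : HSym :=
  if b then HSym.b1 else HSym.b0

theorem HSym.ofBool_injective : Function.Injective HSym.ofBool := by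
  decide

theorem HSym.ofBool_ne_hash (b : Bool) : HSym.ofBool b ≠ HSym.hash := by
  cases b <;> decide

def binWord {D : ℕ} (u : Fin D → Bool) : List HSym :=
  List.ofFn (HSym.ofBool ∘ u)

@[simp]
theorem length_binWord {D : ℕ} (u : Fin D → Bool) : (binWord u).length = D :=
  List.length_ofFn

theorem binWord_isBin {D : ℕ} (u : Fin D → Bool) : HSym.IsBin (binWord u) := by
  simp [HSym.IsBin, binWord, List.mem_ofFn, HSym.ofBool_ne_hash]

theorem binWord_injective (D : ℕ) : Function.Injective (binWord (D := D)) :=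
  fun _ _ h => HSym.ofBool_injective.comp_left (List.ofFn_injective h)

section SetCode

variable {D : ℕ}

/-- Absent words are padded by `D + 1` empty words, so that all codes have the same length. -/
noncomputable def codeWords (v : (Fin D → Bool) → Bool) : List (List HSym) :=
  Finset.univ.toList.flatMap fun u => if v u then [binWord u] else List.replicate (D + 1) []

noncomputable def setCode (v : (Fin D → Bool) → Bool) : List HSym :=
  hashJoin (codeWords v)

theorem length_setCode (v : (Fin D → Bool) → Bool) :
    (setCode v).length = (D + 1) * 2 ^ D := by
  have hblock : ∀ u, (hashJoin (if v u then [binWord u] else List.replicate (D + 1) [])).length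
      = D + 1 := by
    intro u
    split <;> simp [hashJoin_replicate_nil]
  simp [setCode, codeWords, hashJoin_flatMap, List.length_flatMap, Function.comp_def, hblock,
    mul_comm]

theorem codeWords_isBin (v : (Fin D → Bool) → Bool) : ∀ w ∈ codeWords v, HSym.IsBin w := by
  simp only [codeWords, List.mem_flatMap]
  rintro w ⟨u, -, hw⟩
  split at hw
  · rw [List.mem_singleton.mp hw]
    exact binWord_isBin u
  · rw [List.eq_of_mem_replicate hw]
    exact List.not_mem_nil

theorem binWord_mem_codeWords_iff (hD : 0 < D) (v : (Fin D → Bool) → Bool) (u : Fin D → Bool) :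
    binWord u ∈ codeWords v ↔ v u := by
  have hne : binWord u ≠ [] := List.ne_nil_of_length_pos (by simpa using hD)
  simp only [codeWords, List.mem_flatMap, Finset.mem_toList, Finset.mem_univ, true_and]
  constructor
  · rintro ⟨u', hu'⟩
    split at hu'
    · rwa [binWord_injective D (List.mem_singleton.mp hu')]
    · exact absurd (List.eq_of_mem_replicate hu') hne
  · intro hu
    exact ⟨u, by simp [hu]⟩

theorem setCode_append_mem_LangK_iff (hD : 0 < D) (v : (Fin D → Bool) → Bool)
    (u : Fin D → Bool) : setCode v ++ (binWord u).reverse ∈ LangK ↔ v u := by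
  rw [setCode, hashJoin_append_mem_LangK_iff (codeWords_isBin v)
    (by simpa [HSym.IsBin] using binWord_isBin u), List.reverse_reverse,
    and_iff_right_of_imp List.ne_nil_of_mem, binWord_mem_codeWords_iff hD]

theorem eq_of_lEquiv_setCode (hD : 0 < D) {v₁ v₂ : (Fin D → Bool) → Bool}
    (h : LEquiv LangK D (setCode v₁) (setCode v₂)) : v₁ = v₂ := by
  funext u
  simpa [setCode_append_mem_LangK_iff hD] using h (binWord u).reverse (by simp)

end SetCode

/-- For every `D ∈ ℕ`,
`E_K((D+1)·2^D, D) ≥ 2^(2^D)`. -/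
theorem K_numClasses_lower (D : ℕ) :
    2 ^ 2 ^ D ≤ numClasses LangK ((D + 1) * 2 ^ D) D := by
  rcases Nat.eq_zero_or_pos D with rfl | hD
  · simpa using two_le_numClasses_LangK_one_zero
  · calc 2 ^ 2 ^ D = Nat.card ((Fin D → Bool) → Bool) := by simp
      _ ≤ _ := card_le_numClasses setCode length_setCode fun _ _ => eq_of_lEquiv_setCode hD
end

section
/- Let Σ be a finite alphabet and L ⊆ Σ*. Suppose there is a constant C ∈ ℕ such that for every D ≥ 1 there exists a length ℓ_D ≤ C·D·2^D with E_L(ℓ_D, D) ≥ 2^(2^D). Then for every function t : ℕ → ℕ with t(n) = o(n/(log n)²), L does not belong to Online(t(n)). -/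
/-!
Let `n = ℓ + D`. When an online machine working on `y ++ x` with `|y| = ℓ`, `|x| = D` first
moves its input head to position `ℓ`, it halts within `(D + 1)(t(n) + 1)` further steps, so its
answer is determined by its state and by the work-tape cells within that distance of the heads.
Hence `E_L(ℓ, D) ≤ |Q| · |Γ| ^ O(D · t(n))`, and `E_L(ℓ_D, D) ≥ 2 ^ 2 ^ D` forces
`t(n) ≳ 2 ^ D / D`. On the other hand `2 ^ D ≤ |Σ| · ℓ_D` (there are only `|Σ| ^ ℓ_D` prefixes)
and `ℓ_D ≤ C · D · 2 ^ D`, so `n / log² n ≈ 2 ^ D / D`, contradicting `t(n) = o(n / log² n)`.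
-/

open Filter

theorem Monotone.sub_le_of_plateau_le {f : ℕ → ℕ} (hf : Monotone f) {N t : ℕ}
    (h : ∀ i j, i ≤ j → j ≤ N → f i = f j → j - i ≤ t) {i j : ℕ} (hij : i ≤ j) (hjN : j ≤ N) :
    j - i ≤ (f j - f i) * (t + 1) + t := by
  induction j using Nat.strong_induction_on with
  | _ j ih =>
  -- `[m, j]` is a single plateau for the first `m` with `f m = f j`; recurse at `m - 1`
  have hex : ∃ k, f k = f j := ⟨j, rfl⟩
  set m := Nat.find hex
  have hmj : m ≤ j := Nat.find_min' hex rfl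
  have hjm : j - m ≤ t := h m j hmj hjN (Nat.find_spec hex)
  by_cases hmi : m ≤ i
  · omega
  have hprev : f (m - 1) < f j :=
    lt_of_le_of_ne ((hf (m.sub_le 1)).trans_eq (Nat.find_spec hex)) (Nat.find_min hex (by omega))
  have hi : f i ≤ f (m - 1) := hf (by omega)
  have hbefore := ih (m - 1) (by omega) (by omega) (by omega)
  have hlevels : (f (m - 1) - f i + 1) * (t + 1) ≤ (f j - f i) * (t + 1) :=
    Nat.mul_le_mul_right _ (by omega)
  rw [add_one_mul] at hlevels
  omega

theorem le_add_mul_of_two_pow_le_mul_pow {m a b e : ℕ} (h : 2 ^ m ≤ a * b ^ e) :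
    m ≤ a + b * e := by
  have : a * b ^ e ≤ 2 ^ (a + b * e) := by
    rw [pow_add, pow_mul]
    exact Nat.mul_le_mul Nat.lt_two_pow_self.le (Nat.pow_le_pow_left Nat.lt_two_pow_self.le e)
  exact (Nat.pow_le_pow_iff_right one_lt_two).1 (h.trans this)

namespace OnlineTM

variable {σ : Type} {M : OnlineTM σ}

theorem stepCfg_of_q_mem_Halt (z : List σ) {c : OCfg M} (h : c.q ∈ M.Halt) :
    M.stepCfg z c = c := by
  simp [stepCfg, h]

theorem ipos_le_stepCfg_ipos (z : List σ) (c : OCfg M) : c.ipos ≤ (M.stepCfg z c).ipos := by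
  unfold stepCfg
  split_ifs
  · rfl
  · dsimp only
    split_ifs <;> omega

theorem stepCfg_ipos_le_succ (z : List σ) (c : OCfg M) :
    (M.stepCfg z c).ipos ≤ c.ipos + 1 := by
  unfold stepCfg
  split_ifs
  · omega
  · dsimp only
    split_ifs <;> omega

theorem stepCfg_congr_input {z z' : List σ} {c : OCfg M} (h : z[c.ipos]? = z'[c.ipos]?) :
    M.stepCfg z c = M.stepCfg z' c := by
  unfold stepCfg
  rw [h]

theorem runCfg_succ (z : List σ) (k : ℕ) : M.runCfg z (k + 1) = M.stepCfg z (M.runCfg z k) :=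
  Function.iterate_succ_apply' _ _ _

theorem runCfg_add (z : List σ) (T s : ℕ) :
    M.runCfg z (T + s) = (M.stepCfg z)^[s] (M.runCfg z T) := by
  rw [runCfg, add_comm, Function.iterate_add_apply]
  rfl

theorem runCfg_add_of_q_mem_Halt {z : List σ} {N : ℕ} (h : (M.runCfg z N).q ∈ M.Halt) (k : ℕ) :
    M.runCfg z (N + k) = M.runCfg z N := by
  rw [runCfg_add]
  exact Function.iterate_fixed (stepCfg_of_q_mem_Halt z h) k

theorem monotone_runCfg_ipos (z : List σ) : Monotone fun k => (M.runCfg z k).ipos :=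
  monotone_nat_of_le_succ fun k => by
    rw [runCfg_succ]
    exact ipos_le_stepCfg_ipos z _

theorem exists_runCfg_ipos_eq_of_le (z : List σ) {p N : ℕ} (hp : p ≤ (M.runCfg z N).ipos) :
    ∃ T, (M.runCfg z T).ipos = p ∧ ∀ j < T, (M.runCfg z j).ipos < p := by
  have hex : ∃ k, p ≤ (M.runCfg z k).ipos := ⟨N, hp⟩
  refine ⟨Nat.find hex, ?_, fun j hj => not_le.1 (Nat.find_min hex hj)⟩
  have hreach := Nat.find_spec hex
  rcases hT : Nat.find hex with _ | T
  · rw [hT] at hreach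
    have h0 : (M.runCfg z 0).ipos = 0 := rfl
    omega
  · have hbefore := Nat.find_min hex (show T < Nat.find hex by omega)
    rw [hT, runCfg_succ] at hreach
    have := stepCfg_ipos_le_succ z (M.runCfg z T)
    rw [runCfg_succ]
    omega

theorem runCfg_append_eq {y x x' : List σ} (hx : x.length = x'.length) {k : ℕ}
    (hk : ∀ j < k, (M.runCfg (y ++ x') j).ipos < y.length) :
    M.runCfg (y ++ x) k = M.runCfg (y ++ x') k := by
  induction k with
  | zero => simp [runCfg, hx]
  | succ k ih =>
    rw [runCfg_succ, runCfg_succ, ih fun j hj => hk j (by omega)]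
    apply stepCfg_congr_input
    have hin := hk k k.lt_succ_self
    rw [List.getElem?_append_left hin, List.getElem?_append_left hin]

theorem DecidesIn.mem_iff_runCfg_q_mem_F {L : Set (List σ)} {t : ℕ → ℕ} (hM : M.DecidesIn L t)
    (z : List σ) (T : ℕ) :
    z ∈ L ↔
      (M.runCfg z (T + (z.length - (M.runCfg z T).ipos + 1) * (t z.length + 1))).q ∈ M.F := by
  obtain ⟨N, hhalt, -, hpos, hacc, hgap⟩ := hM z
  have hN : N ≤ T + (z.length - (M.runCfg z T).ipos + 1) * (t z.length + 1) := by
    rcases le_or_gt N T with hNT | hTN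
    · exact le_add_right hNT
    · have := (monotone_runCfg_ipos z).sub_le_of_plateau_le hgap hTN.le le_rfl
      rw [hpos] at this
      rw [add_one_mul]
      omega
  rw [← Nat.add_sub_cancel' hN, runCfg_add_of_q_mem_Halt hhalt, hacc]

def AgreeWithin (r : ℕ) (c₁ c₂ : OCfg M) : Prop :=
  c₁.q = c₂.q ∧ c₁.ipos = c₂.ipos ∧
    ∀ i (d : ℤ), |d| ≤ r → c₁.tape i (c₁.hd i + d) = c₂.tape i (c₂.hd i + d)

theorem AgreeWithin.mono {r r' : ℕ} (h : r' ≤ r) {c₁ c₂ : OCfg M} (hc : AgreeWithin r c₁ c₂) :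
    AgreeWithin r' c₁ c₂ :=
  ⟨hc.1, hc.2.1, fun i d hd => hc.2.2 i d (hd.trans (by exact_mod_cast h))⟩

theorem AgreeWithin.stepCfg {z₁ z₂ : List σ} {c₁ c₂ : OCfg M} {r : ℕ}
    (hc : AgreeWithin (r + 1) c₁ c₂) (hz : z₁[c₁.ipos]? = z₂[c₂.ipos]?) :
    AgreeWithin r (M.stepCfg z₁ c₁) (M.stepCfg z₂ c₂) := by
  obtain ⟨hq, hpos, htape⟩ := hc
  by_cases hH : c₁.q ∈ M.Halt
  · rw [stepCfg_of_q_mem_Halt z₁ hH, stepCfg_of_q_mem_Halt z₂ (hq ▸ hH)]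
    exact AgreeWithin.mono r.le_succ ⟨hq, hpos, htape⟩
  have hscan : (fun i => c₁.tape i (c₁.hd i)) = fun i => c₂.tape i (c₂.hd i) := by
    funext i
    simpa using htape i 0 (by simp; positivity)
  unfold OnlineTM.stepCfg
  rw [if_neg hH, if_neg (hq ▸ hH), hq, hz, hscan]
  refine ⟨rfl, by simp only [hpos], fun i d hd => ?_⟩
  set u := M.δ c₂.q z₂[c₂.ipos]? fun i => c₂.tape i (c₂.hd i)
  have hoff : |(u.2.2 i).2.offset| ≤ 1 := by cases (u.2.2 i).2 <;> simp [TMMove.offset]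
  dsimp only
  by_cases h0 : (u.2.2 i).2.offset + d = 0
  · rw [if_pos (by omega), if_pos (by omega)]
  · rw [if_neg (by omega), if_neg (by omega), add_assoc, add_assoc]
    exact htape i _ ((abs_add_le _ _).trans (by push_cast; linarith))

theorem AgreeWithin.iterate {z₁ z₂ : List σ} {r s : ℕ} {c₁ c₂ : OCfg M}
    (hc : AgreeWithin (r + s) c₁ c₂) (hz : ∀ p ≥ c₁.ipos, z₁[p]? = z₂[p]?) :
    AgreeWithin r ((M.stepCfg z₁)^[s] c₁) ((M.stepCfg z₂)^[s] c₂) := by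
  induction s generalizing c₁ c₂ with
  | zero => exact hc
  | succ s ih =>
    refine ih (AgreeWithin.stepCfg hc ?_) fun p hp => hz p ((ipos_le_stepCfg_ipos z₁ c₁).trans hp)
    rw [← hc.2.1]
    exact hz _ le_rfl

end OnlineTM

section Counting

variable {σ : Type}

theorem numClasses_le_natCard_of_signature {α : Type*} [Finite α] (L : Set (List σ)) {ℓ m : ℕ}
    (sig : { y : List σ // y.length = ℓ } → α)
    (hsig : ∀ y₁ y₂, sig y₁ = sig y₂ → LEquiv L m y₁.1 y₂.1) :
    numClasses L ℓ m ≤ Nat.card α :=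
  Nat.card_le_card_of_injective (fun c => sig c.out) fun c₁ c₂ h => by
    rw [← Quot.out_eq c₁, ← Quot.out_eq c₂]
    exact Quot.sound (hsig _ _ h)

theorem numClasses_le_card_pow [Fintype σ] (L : Set (List σ)) (ℓ m : ℕ) :
    numClasses L ℓ m ≤ Fintype.card σ ^ ℓ := by
  have : Finite { y : List σ // y.length = ℓ } := (List.finite_length_eq σ ℓ).to_subtype
  calc numClasses L ℓ m ≤ Nat.card { y : List σ // y.length = ℓ } :=
        Nat.card_le_card_of_surjective _ Quot.mk_surjective
    _ = Fintype.card σ ^ ℓ := by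
      rw [← card_vector, ← Nat.card_eq_fintype_card]
      rfl

end Counting

namespace OnlineTM.DecidesIn

variable {σ : Type} {M : OnlineTM σ} {L : Set (List σ)} {t : ℕ → ℕ}

theorem mem_iff_mem_of_agreeWithin (hM : M.DecidesIn L t) {y₁ y₂ x : List σ}
    (hy : y₁.length = y₂.length) {T₁ T₂ : ℕ}
    (hc : AgreeWithin ((x.length + 1) * (t (y₁.length + x.length) + 1))
      (M.runCfg (y₁ ++ x) T₁) (M.runCfg (y₂ ++ x) T₂))
    (hpos : (M.runCfg (y₁ ++ x) T₁).ipos = y₁.length) :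
    y₁ ++ x ∈ L ↔ y₂ ++ x ∈ L := by
  have hpos₂ : (M.runCfg (y₂ ++ x) T₂).ipos = y₂.length := hc.2.1 ▸ hy ▸ hpos
  have hsuffix : ∀ p ≥ (M.runCfg (y₁ ++ x) T₁).ipos, (y₁ ++ x)[p]? = (y₂ ++ x)[p]? := by
    intro p hp
    rw [hpos] at hp
    rw [List.getElem?_append_right (by omega), List.getElem?_append_right (by omega), hy]
  have hq := (AgreeWithin.iterate (r := 0) (by rwa [zero_add]) hsuffix).1
  rw [← runCfg_add, ← runCfg_add] at hq
  rw [hM.mem_iff_runCfg_q_mem_F _ T₁, hM.mem_iff_runCfg_q_mem_F _ T₂, hpos, hpos₂,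
    List.length_append, List.length_append, ← hy, Nat.add_sub_cancel_left, hq]

theorem numClasses_le [Nonempty σ] (hM : M.DecidesIn L t) (ℓ D : ℕ) :
    numClasses L ℓ D ≤ Nat.card M.Q *
      Nat.card M.Γ ^ ((M.tapes + 1) * (2 * ((D + 1) * (t (ℓ + D) + 1)) + 1)) := by
  have := M.finQ
  have := M.finΓ
  set R := (D + 1) * (t (ℓ + D) + 1)
  let x₀ : List σ := List.replicate D (Classical.arbitrary σ)
  have hreach (y : { y : List σ // y.length = ℓ }) : ∃ T, (M.runCfg (y.1 ++ x₀) T).ipos = ℓ ∧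
      ∀ j < T, (M.runCfg (y.1 ++ x₀) j).ipos < ℓ := by
    obtain ⟨N, -, -, hpos, -⟩ := hM (y.1 ++ x₀)
    exact exists_runCfg_ipos_eq_of_le _ (N := N) (by simp [hpos, y.2])
  choose T hT hTfirst using hreach
  have hprefix (y : { y : List σ // y.length = ℓ }) (x : List σ) (hx : x.length = D) :
      M.runCfg (y.1 ++ x) (T y) = M.runCfg (y.1 ++ x₀) (T y) :=
    runCfg_append_eq (by simp [x₀, hx]) fun j hj => y.2.symm ▸ hTfirst y j hj
  let sig (y : { y : List σ // y.length = ℓ }) :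
      M.Q × (Fin (M.tapes + 1) → Set.Icc (-(R : ℤ)) R → M.Γ) :=
    ((M.runCfg (y.1 ++ x₀) (T y)).q,
      fun i d => (M.runCfg (y.1 ++ x₀) (T y)).tape i ((M.runCfg (y.1 ++ x₀) (T y)).hd i + d))
  refine (numClasses_le_natCard_of_signature L sig fun y₁ y₂ hsig x hx => ?_).trans ?_
  · refine hM.mem_iff_mem_of_agreeWithin (y₁.2.trans y₂.2.symm) (T₂ := T y₂) ?_
      (by rw [hprefix y₁ x hx, hT, y₁.2])
    rw [hprefix y₁ x hx, hprefix y₂ x hx, y₁.2, hx]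
    refine ⟨congrArg Prod.fst hsig, by rw [hT, hT], fun i d hd => ?_⟩
    exact congrFun (congrFun (congrArg Prod.snd hsig) i) ⟨d, abs_le.1 hd⟩
  · have hwin : Nat.card (Set.Icc (-(R : ℤ)) R) = 2 * R + 1 := by
      simp [Nat.card_eq_fintype_card]
      omega
    rw [Nat.card_prod, Nat.card_fun, Nat.card_fun, hwin, Nat.card_fin, ← pow_mul,
      mul_comm (2 * R + 1)]

theorem exists_two_pow_le [Fintype σ] (hM : M.DecidesIn L t) :
    ∃ K, ∀ ℓ D, 1 ≤ D → 2 ^ 2 ^ D ≤ numClasses L ℓ D → 2 ^ D ≤ K * D * (t (ℓ + D) + 1) := by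
  refine ⟨Nat.card M.Q + 5 * Nat.card M.Γ * (M.tapes + 1), fun ℓ D hD hcl => ?_⟩
  have : Nonempty σ := by
    refine Fintype.card_pos_iff.1 (Nat.pos_of_ne_zero fun hσ => ?_)
    have := hcl.trans (numClasses_le_card_pow L ℓ D)
    rw [hσ] at this
    have := Nat.one_lt_two_pow (n := 2 ^ D) (by positivity)
    have := zero_pow_le_one (M₀ := ℕ) ℓ
    omega
  have h := le_add_mul_of_two_pow_le_mul_pow (hcl.trans (hM.numClasses_le ℓ D))
  set X := t (ℓ + D)
  have hstate : Nat.card M.Q ≤ Nat.card M.Q * (D * (X + 1)) :=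
    Nat.le_mul_of_pos_right _ (by positivity)
  have hwindow : 2 * ((D + 1) * (X + 1)) + 1 ≤ 5 * (D * (X + 1)) := by nlinarith
  calc 2 ^ D ≤ Nat.card M.Q + Nat.card M.Γ * ((M.tapes + 1) * (2 * ((D + 1) * (X + 1)) + 1)) := h
    _ ≤ Nat.card M.Q * (D * (X + 1)) + Nat.card M.Γ * ((M.tapes + 1) * (5 * (D * (X + 1)))) := by
      gcongr
    _ = _ := by ring

end OnlineTM.DecidesIn

theorem not_littleOOfNOverLogSq_of_eventually {t : ℕ → ℕ} {s c K : ℕ}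
    (h : ∀ᶠ D in atTop, ∃ n, 2 ^ D ≤ s * n ∧ n ≤ c * D * 2 ^ D ∧ 2 ^ D ≤ K * D * (t n + 1)) :
    ¬ LittleOOfNOverLogSq t := by
  intro ht
  obtain ⟨hc, hK⟩ : 0 < c ∧ 0 < K := by
    obtain ⟨D, n, hsn, hnc, hKX⟩ := h.exists
    refine ⟨Nat.pos_of_ne_zero fun hc => ?_, Nat.pos_of_ne_zero fun hK => ?_⟩
    · simp only [hc, zero_mul, nonpos_iff_eq_zero] at hnc
      simp [hnc] at hsn
    · simp [hK] at hKX
  set lg := Real.log 2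
  have hlg : 0 < lg := Real.log_pos one_lt_two
  -- chosen so that the estimate `htD` below gives `K D t(n) < 2 ^ D / 2`
  set ε := lg ^ 2 / (8 * c * K)
  obtain ⟨N₀, hN₀⟩ := eventually_atTop.1 (ht.eventually (gt_mem_nhds (by positivity : 0 < ε)))
  have hlog : ∀ᶠ D : ℕ in atTop, Real.log s ≤ D * (lg / 2) :=
    (tendsto_natCast_atTop_atTop.atTop_mul_const (by positivity)).eventually_ge_atTop _
  have hexp : ∀ᶠ D : ℕ in atTop, (D : ℝ) ^ 1 / 2 ^ D < 1 / (4 * K) :=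
    (tendsto_pow_const_div_const_pow_of_one_lt 1 one_lt_two).eventually
      (gt_mem_nhds (by positivity))
  obtain ⟨D, ⟨n, hsn, hnc, hKX⟩, hlogD, hexpD, hDN₀⟩ :=
    (h.and (hlog.and (hexp.and (eventually_gt_atTop (s * N₀))))).exists
  have hsN₀n : s * N₀ < s * n := hDN₀.trans (Nat.lt_two_pow_self.trans_le hsn)
  obtain ⟨hs, hn⟩ := CanonicallyOrderedAdd.mul_pos.1 ((Nat.zero_le _).trans_lt hsN₀n)
  have hD : (0 : ℝ) < D := by exact_mod_cast (Nat.zero_le _).trans_lt hDN₀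
  have hlogn : D * lg / 2 ≤ Real.log n :=
    calc D * lg / 2 ≤ D * lg - Real.log s := by linarith
      _ = Real.log (2 ^ D / s) := by
        rw [Real.log_div (by positivity) (by positivity), Real.log_pow]
      _ ≤ Real.log n := Real.log_le_log (by positivity) <| by
        rw [div_le_iff₀ (by positivity)]
        exact_mod_cast hsn.trans_eq (mul_comm _ _)
  have htn : (t n : ℝ) * Real.log n ^ 2 < ε * n :=
    (div_lt_iff₀ (by exact_mod_cast hn)).1 (hN₀ n (Nat.le_of_mul_le_mul_left hsN₀n.le hs))
  have hnc : (n : ℝ) ≤ c * D * 2 ^ D := by exact_mod_cast hnc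
  have hKX : (2 : ℝ) ^ D ≤ K * D * (t n + 1) := by exact_mod_cast hKX
  have hexpD : 4 * K * (D : ℝ) < 2 ^ D := by
    rw [pow_one, div_lt_div_iff₀ (by positivity) (by positivity)] at hexpD
    linarith
  have htD : (K : ℝ) * D * t n < 2 ^ D / 2 := by
    have : (t n : ℝ) * (D * lg / 2) ^ 2 < ε * (c * D * 2 ^ D) :=
      calc (t n : ℝ) * (D * lg / 2) ^ 2 ≤ t n * Real.log n ^ 2 := by gcongr
        _ < ε * n := htn
        _ ≤ ε * (c * D * 2 ^ D) := by gcongr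
    have hε : ε * (c * D * 2 ^ D) = (D * lg ^ 2 / 4) * (2 ^ D / (2 * K)) := by
      simp only [ε]
      field_simp
      ring
    rw [hε, show (t n : ℝ) * (D * lg / 2) ^ 2 = (D * lg ^ 2 / 4) * (D * t n) by ring,
      mul_lt_mul_iff_right₀ (by positivity), lt_div_iff₀ (by positivity)] at this
    linarith
  have : (K : ℝ) * D * (t n + 1) = K * D * t n + K * D := by ring
  linarith [show (0 : ℝ) < 2 ^ D by positivity]

/-- Rosenberg's method. Let `L` be a language over a finite
alphabet.  If there is a constant `C` such that for every `D ≥ 1` there is a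
length `ℓ_D ≤ C·D·2^D` with `E_L(ℓ_D, D) ≥ 2^(2^D)`, then for every
`t : ℕ → ℕ` with `t(n) = o(n/(log n)²)`, `L ∉ Online(t(n))`. -/
theorem many_classes_not_online (σ : Type) [Fintype σ] (L : Set (List σ))
    (C : ℕ) (hC : ∀ D : ℕ, 1 ≤ D → ∃ ℓD : ℕ, ℓD ≤ C * D * 2 ^ D ∧
      2 ^ 2 ^ D ≤ numClasses L ℓD D)
    (t : ℕ → ℕ) (ht : LittleOOfNOverLogSq t) :
    L ∉ OnlineClass σ t := by
  rintro ⟨M, hM⟩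
  obtain ⟨K, hK⟩ := hM.exists_two_pow_le
  refine not_littleOOfNOverLogSq_of_eventually (s := Fintype.card σ + 1) (c := C + 1) (K := K) ?_ ht
  filter_upwards [eventually_ge_atTop 1] with D hD
  obtain ⟨ℓ, hℓ, hcl⟩ := hC D hD
  have hprefixes : 2 ^ D ≤ 1 + Fintype.card σ * ℓ :=
    le_add_mul_of_two_pow_le_mul_pow ((hcl.trans (numClasses_le_card_pow L ℓ D)).trans_eq
      (one_mul _).symm)
  refine ⟨ℓ + D, by nlinarith, ?_, hK ℓ D hD hcl⟩
  nlinarith [Nat.one_le_two_pow (n := D)]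
end
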